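/- arXiv:2202.08601 — 4 statements merged into one kernel-verified Lean document; each statement's English description precedes it below -/
import Mathlib

section
/- Let y ∈ ℂ⁶ ∖ {0} with Σ_k y_k = 0. There exist a linear form ℓ and a quadratic form q in ℂ[X₀,…,X₅] such that Σ_{t=0}^{5} X_t³ − ℓ·q lies in the ideal generated by Σ_{t=0}^{5} X_t and Σ_{t=0}^{5} y_t X_t (i.e. the cubic surface Σ₃ ∩ H_y is reducible) if and only if there is a fixed-point-free involution τ of {0,…,5} with y_{τ(k)} = y_k for all k (i.e. [y] lies on one of the 15 singular lines L_τ of the Castelnuovo–Richmond quartic). -/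
/-!
`Σ₃ ∩ H_y` is the Fermat cubic `∑ xₜ³` restricted to `{∑ xₜ = 0, ∑ yₜ xₜ = 0}`. If it splits off a
linear form `ℓ`, the cubic vanishes on a space `W` of dimension at least 3, hence so does its
polarization `∑ uₜ vₜ wₜ`. Put three vectors `pᵢ ∈ W` in reduced echelon form, with pivot
coordinates `idx i`. The linear map `c ↦ ∑ₜ cₜ vₜ vₜᵀ`, `vₜ = (pᵢ t)ᵢ`, kills the `pᵢ` and hits
the three diagonal matrix units, so by rank–nullity its image consists of diagonal matrices: the
`pᵢ` have disjoint supports. As each `pᵢ` sums to zero, these supports are three pairs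
partitioning the six coordinates and `pᵢ = e_{aᵢ} - e_{dᵢ}`; since `y` is orthogonal to `W`, it is
constant on each pair.

Conversely, if `y` is constant on three pairs, with values `A ≠ B` on the first two, the pair sums
`s₀, s₁, s₂` satisfy `s₀ ≡ α s₂` and `s₁ ≡ β s₂` modulo the two linear forms, and
`4 (x³ + x'³) = s³ + 3 s (x - x')²` for `s = x + x'` shows that the cubic is `s₂` times a quadric
modulo them.
-/

open scoped BigOperators
open MvPolynomial

/-- A fixed-point-free involution of `{0,…,5}`. -/
def FPF (τ : Equiv.Perm (Fin 6)) : Prop :=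
  (∀ i, τ (τ i) = i) ∧ ∀ i, τ i ≠ i

open Module Finset Function

def SegreSectionReducible {K : Type*} [Field K] (y : Fin 6 → K) : Prop :=
  ∃ l q : MvPolynomial (Fin 6) K, l.IsHomogeneous 1 ∧ q.IsHomogeneous 2 ∧
    (∑ t, X t ^ 3) - l * q ∈ Ideal.span {∑ t, X t, ∑ t, C (y t) * X t}

theorem MvPolynomial.IsHomogeneous.exists_eq_sum_smul_X {σ R : Type*} [CommSemiring R]
    [Fintype σ] {l : MvPolynomial σ R} (hl : l.IsHomogeneous 1) :
    ∃ c : σ → R, l = ∑ i, c i • X i := by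
  have hspan : l ∈ Submodule.span R (Set.range X) := by
    rw [← homogeneousSubmodule_one_eq_span_X]
    exact hl
  obtain ⟨c, hc⟩ := (Submodule.mem_span_range_iff_exists_fun R).mp hspan
  exact ⟨c, hc.symm⟩

theorem MvPolynomial.eval_eq_zero_of_sub_mul_mem_span_pair {σ R : Type*} [CommRing R]
    {f l q g₁ g₂ : MvPolynomial σ R} {x : σ → R} (h : f - l * q ∈ Ideal.span {g₁, g₂})
    (h₁ : eval x g₁ = 0) (h₂ : eval x g₂ = 0) (hl : eval x l = 0) : eval x f = 0 := by
  obtain ⟨a, b, hab⟩ := Ideal.mem_span_pair.mp h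
  have := congrArg (eval x) hab
  simp only [map_add, map_mul, map_sub, h₁, h₂, hl] at this
  linear_combination -this

section LinearAlgebra

variable {K : Type*} [Field K] {ι : Type*}

theorem exists_ne_of_sum_eq_zero [CharZero K] [Fintype ι] {y : ι → K} (hy : y ≠ 0)
    (hsum : ∑ k, y k = 0) : ∃ a b, y a ≠ y b := by
  by_contra! h
  refine hy (funext fun t => ?_)
  have : Nonempty ι := ⟨t⟩
  have hconst : ∑ k, y k = Fintype.card ι • y t := by
    rw [← card_univ, ← sum_const]
    exact sum_congr rfl fun k _ => h k t
  rw [hsum, nsmul_eq_mul, eq_comm, mul_eq_zero] at hconst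
  exact hconst.resolve_left (Nat.cast_ne_zero.mpr Fintype.card_ne_zero)

theorem sum_mul_mul_eq_zero_of_sum_pow_three_eq_zero [CharZero K] [Fintype ι]
    {W : Submodule K (ι → K)} (hW : ∀ x ∈ W, ∑ t, x t ^ 3 = 0) {u v w : ι → K}
    (hu : u ∈ W) (hv : v ∈ W) (hw : w ∈ W) : ∑ t, u t * v t * w t = 0 := by
  have key : (6 : K) * ∑ t, u t * v t * w t =
      ∑ t, (u + v + w) t ^ 3 - ∑ t, (u + v) t ^ 3 - ∑ t, (u + w) t ^ 3 - ∑ t, (v + w) t ^ 3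
        + ∑ t, u t ^ 3 + ∑ t, v t ^ 3 + ∑ t, w t ^ 3 := by
    simp only [mul_sum, ← sum_sub_distrib, ← sum_add_distrib, Pi.add_apply]
    exact sum_congr rfl fun t _ => by ring
  rw [hW _ (W.add_mem (W.add_mem hu hv) hw), hW _ (W.add_mem hu hv), hW _ (W.add_mem hu hw),
    hW _ (W.add_mem hv hw), hW u hu, hW v hv, hW w hw] at key
  simpa using key

theorem linearIndependent_of_pivots {m : ℕ} {p : Fin m → ι → K} {idx : Fin m → ι}
    (hpiv : ∀ i j, p i (idx j) = if i = j then 1 else 0) : LinearIndependent K p := by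
  rw [Fintype.linearIndependent_iff]
  intro c hc i
  simpa [hpiv] using congrFun hc (idx i)

variable [Fintype ι]

theorem Submodule.exists_pivots (W : Submodule K (ι → K)) :
    ∀ m ≤ finrank K W, ∃ (p : Fin m → ι → K) (idx : Fin m → ι),
      (∀ i, p i ∈ W) ∧ ∀ i j, p i (idx j) = if i = j then 1 else 0 := by
  intro m
  induction m with
  | zero => exact fun _ => ⟨Fin.elim0, Fin.elim0, Fin.rec0, Fin.rec0⟩
  | succ m ih =>
    intro hm
    obtain ⟨p, idx, hpW, hpiv⟩ := ih (by omega)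
    let f : W →ₗ[K] Fin m → K := LinearMap.pi fun j => (LinearMap.proj (idx j)).comp W.subtype
    obtain ⟨⟨w, hwW⟩, hw, hw0⟩ := Submodule.exists_mem_ne_zero_of_ne_bot
      (LinearMap.ker_ne_bot_of_finrank_lt (f := f) (by simp; omega))
    have hwidx : ∀ j, w (idx j) = 0 := fun j => congrFun hw j
    obtain ⟨a, ha⟩ : ∃ a, w a ≠ 0 := by
      by_contra! h
      exact hw0 (Subtype.ext (funext h))
    set v := (w a)⁻¹ • w
    refine ⟨Fin.snoc (fun i => p i - p i a • v) v, Fin.snoc idx a, ?_, ?_⟩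
    · refine Fin.lastCases ?_ (fun i => ?_)
      · simpa using W.smul_mem _ hwW
      · simpa using W.sub_mem (hpW i) (W.smul_mem _ (W.smul_mem _ hwW))
    · refine Fin.lastCases (Fin.lastCases ?_ fun j => ?_) fun i => Fin.lastCases ?_ fun j => ?_
      · simp [v, ha]
      · simp [v, hwidx, (Fin.castSucc_lt_last j).ne']
      · simp [v, ha, (Fin.castSucc_lt_last i).ne]
      · simp [v, hwidx, hpiv]

theorem mul_eq_zero_of_pivots {m : ℕ} {p : Fin m → ι → K} {idx : Fin m → ι}
    (hpiv : ∀ i j, p i (idx j) = if i = j then 1 else 0)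
    (hT : ∀ i j k, ∑ t, p i t * p j t * p k t = 0) (hcard : Fintype.card ι ≤ 2 * m)
    (t : ι) {i j : Fin m} (hij : i ≠ j) : p i t * p j t = 0 := by
  let v : ι → Matrix (Fin m) (Fin m) K := fun t => Matrix.vecMulVec (p · t) (p · t)
  let Φ := Fintype.linearCombination K v
  have hv : ∀ k, v (idx k) = Matrix.diagonal (Pi.single k 1) := by
    intro k; ext a b
    simp only [v, Matrix.vecMulVec_apply, hpiv, Matrix.diagonal_apply, Pi.single_apply]
    split_ifs <;> simp_all
  have hker : Submodule.span K (Set.range p) ≤ LinearMap.ker Φ := by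
    refine Submodule.span_le.mpr (Set.range_subset_iff.mpr fun k => ?_)
    ext a b
    simpa [Φ, v, Fintype.linearCombination_apply, Matrix.sum_apply, Matrix.vecMulVec_apply,
      mul_assoc, mul_comm, mul_left_comm] using hT k a b
  let E := Submodule.span K (Set.range (v ∘ idx))
  have hE : LinearIndependent K (v ∘ idx) := by
    have := (Pi.linearIndependent_single_one (Fin m) K).map' (Matrix.diagonalLinearMap (Fin m) K K)
      (LinearMap.ker_eq_bot.mpr Matrix.diagonal_injective)
    rwa [show v ∘ idx = Matrix.diagonalLinearMap (Fin m) K K ∘ (Pi.single · 1) from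
      funext fun k => by simp [hv]]
  have hErange : E ≤ LinearMap.range Φ := by
    rw [Fintype.range_linearCombination]
    exact Submodule.span_mono (Set.range_comp_subset_range idx v)
  have hrank := LinearMap.finrank_range_add_finrank_ker Φ
  have hkerdim := Submodule.finrank_mono hker
  rw [finrank_span_eq_card (linearIndependent_of_pivots hpiv), Fintype.card_fin] at hkerdim
  have heq : E = LinearMap.range Φ := by
    refine Submodule.eq_of_le_of_finrank_le hErange ?_
    rw [finrank_span_eq_card hE, Fintype.card_fin]
    rw [Module.finrank_fintype_fun_eq_card] at hrank
    omega
  have hvt : v t ∈ E := heq ▸ (Fintype.range_linearCombination K v ▸ Submodule.subset_span ⟨t, rfl⟩)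
  have hdiag : E ≤ LinearMap.range (Matrix.diagonalLinearMap (Fin m) K K) := by
    refine Submodule.span_le.mpr (Set.range_subset_iff.mpr fun k => ⟨Pi.single k 1, ?_⟩)
    simp [hv]
  obtain ⟨d, hd⟩ := hdiag hvt
  simpa [v, Matrix.vecMulVec_apply, hij] using (congrFun (congrFun hd i) j).symm

theorem exists_pairing_of_pivots [DecidableEq ι] {m : ℕ} {p : Fin m → ι → K} {idx : Fin m → ι}
    (hpiv : ∀ i j, p i (idx j) = if i = j then 1 else 0)
    (hdisj : ∀ t {i j}, i ≠ j → p i t * p j t = 0) (hsum : ∀ i, ∑ t, p i t = 0)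
    (hcard : Fintype.card ι ≤ 2 * m) :
    ∃ g : Fin m × Fin 2 ≃ ι, ∀ i, p i = Pi.single (g (i, 0)) 1 - Pi.single (g (i, 1)) 1 := by
  have hother : ∀ i, ∃ d, d ≠ idx i ∧ p i d ≠ 0 := by
    intro i
    by_contra! h
    have := hsum i
    rw [sum_eq_single (idx i) (fun t _ ht => h t ht) (by simp)] at this
    simp [hpiv] at this
  choose d hd hpd using hother
  have hsame : ∀ {i j t}, p i t ≠ 0 → p j t ≠ 0 → i = j := fun hi hj =>
    by_contra fun h => mul_ne_zero hi hj (hdisj _ h)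
  let f : Fin m × Fin 2 → ι := fun x => ![idx x.1, d x.1] x.2
  have hf : ∀ x, p x.1 (f x) ≠ 0 := by
    rintro ⟨i, e⟩
    fin_cases e <;> simp [f, hpiv, hpd]
  have hinj : Injective f := by
    rintro ⟨i, e⟩ ⟨j, e'⟩ h
    obtain rfl : i = j := hsame (hf (i, e)) (h ▸ hf (j, e'))
    fin_cases e <;> fin_cases e' <;> simp_all [f, eq_comm]
  have hbij : Bijective f := (Fintype.bijective_iff_injective_and_card f).mpr
    ⟨hinj, le_antisymm (Fintype.card_le_of_injective f hinj) (by simpa [mul_comm] using hcard)⟩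
  let g := Equiv.ofBijective f hbij
  refine ⟨g, fun i => ?_⟩
  have hzero : ∀ x : Fin m × Fin 2, x.1 ≠ i → p i (g x) = 0 := fun x hx =>
    by_contra fun h => hx (hsame (hf x) h)
  have hdi : p i (d i) = -1 := by
    have := hsum i
    rw [← g.sum_comp, Fintype.sum_prod_type,
      sum_eq_single i (fun j _ hj => by simp [hzero (j, _) hj]) (by simp)] at this
    simp [g, f, hpiv] at this
    linear_combination this
  funext t
  obtain ⟨⟨j, e⟩, rfl⟩ := g.surjective t
  by_cases hj : j = i
  · subst hj
    fin_cases e <;> simp [g, f, hpiv, hdi, hd, (hd j).symm]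
  · simp [hzero (j, e) hj, hj]

end LinearAlgebra

-- A partition of the six coordinates into three pairs is encoded as `g : Fin 3 × Fin 2 ≃ Fin 6`,
-- the `i`-th pair being `{g (i, 0), g (i, 1)}`.
def pairSwap : Equiv.Perm (Fin 3 × Fin 2) := Equiv.prodCongr (Equiv.refl _) (Equiv.swap 0 1)

theorem FPF.permCongr_pairSwap (g : Fin 3 × Fin 2 ≃ Fin 6) : FPF (g.permCongr pairSwap) := by
  have hinv : ∀ x, pairSwap (pairSwap x) = x := by decide
  have hne : ∀ x, pairSwap x ≠ x := by decide
  exact ⟨fun k => by simp [hinv], fun k => by simp [← g.eq_symm_apply, hne]⟩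

theorem sum_eq_of_pairing {M : Type*} [AddCommMonoid M] (g : Fin 3 × Fin 2 ≃ Fin 6)
    (f : Fin 6 → M) : ∑ t, f t = f (g (0, 0)) + f (g (0, 1))
      + (f (g (1, 0)) + f (g (1, 1))) + (f (g (2, 0)) + f (g (2, 1))) := by
  simp [← g.sum_comp, Fintype.sum_prod_type, Fin.sum_univ_three, add_assoc]

theorem exists_fpf_of_pairing {α : Type*} (g : Fin 3 × Fin 2 ≃ Fin 6) (y : Fin 6 → α)
    (hy : ∀ i, y (g (i, 0)) = y (g (i, 1))) : ∃ τ, FPF τ ∧ ∀ k, y (τ k) = y k := by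
  refine ⟨g.permCongr pairSwap, FPF.permCongr_pairSwap g, fun k => ?_⟩
  obtain ⟨⟨i, e⟩, rfl⟩ := g.surjective k
  fin_cases e <;> simp [pairSwap, hy]

theorem exists_pairing_of_fpf {τ : Equiv.Perm (Fin 6)} (hτ : FPF τ) {a b : Fin 6}
    (hba : b ≠ a) (hbτa : b ≠ τ a) :
    ∃ g : Fin 3 × Fin 2 ≃ Fin 6, g (0, 0) = a ∧ g (1, 0) = b ∧ ∀ i, g (i, 1) = τ (g (i, 0)) := by
  have hτ_comm : ∀ x y, x = τ y ↔ y = τ x := fun x y =>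
    ⟨fun h => by rw [h, hτ.1], fun h => by rw [h, hτ.1]⟩
  obtain ⟨c, hc⟩ : ∃ c, c ∉ ({a, τ a, b, τ b} : Finset (Fin 6)) := by
    by_contra! h
    have := (card_le_card fun x _ => h x : (univ : Finset (Fin 6)).card ≤ _).trans card_le_four
    simp at this
  simp only [mem_insert, mem_singleton, not_or] at hc
  let r := ![a, b, c]
  have hr : ∀ i j, r i = r j ∨ r i = τ (r j) → i = j := by
    intro i j
    fin_cases i <;> fin_cases j <;> simp_all [r, eq_comm]
  let f : Fin 3 × Fin 2 → Fin 6 := fun x => ![r x.1, τ (r x.1)] x.2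
  have hinj : Injective f := by
    rintro ⟨i, e⟩ ⟨j, e'⟩ h
    fin_cases e <;> fin_cases e' <;> simp [f] at h
    · rw [hr i j (.inl h)]
    · obtain rfl := hr i j (.inr h)
      exact absurd h.symm (hτ.2 _)
    · obtain rfl := hr j i (.inr h.symm)
      exact absurd h (hτ.2 _)
    · rw [hr i j (.inl h)]
  let g := Equiv.ofBijective f ((Fintype.bijective_iff_injective_and_card f).mpr ⟨hinj, by simp⟩)
  exact ⟨g, rfl, rfl, fun i => rfl⟩

section Reducibility

variable {K : Type*} [Field K]

theorem Ideal.sub_algebraMap_mul_mem {R : Type*} [CommRing R] [Algebra K R] {I : Ideal R}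
    {s₁ s₂ s₃ : R} {A B D : K} (hAB : A ≠ B) (h₁ : s₁ + s₂ + s₃ ∈ I)
    (h₂ : algebraMap K R A * s₁ + algebraMap K R B * s₂ + algebraMap K R D * s₃ ∈ I) :
    s₁ - algebraMap K R ((B - D) / (A - B)) * s₃ ∈ I := by
  have hinv : algebraMap K R (A - B)⁻¹ * (algebraMap K R A - algebraMap K R B) = 1 := by
    rw [← map_sub, ← map_mul, inv_mul_cancel₀ (sub_ne_zero.mpr hAB), map_one]
  have hα : algebraMap K R ((B - D) / (A - B)) =
      algebraMap K R (A - B)⁻¹ * (algebraMap K R B - algebraMap K R D) := by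
    rw [← map_sub, ← map_mul, div_eq_inv_mul]
  have : s₁ - algebraMap K R ((B - D) / (A - B)) * s₃ = algebraMap K R (A - B)⁻¹ *
      (algebraMap K R A * s₁ + algebraMap K R B * s₂ + algebraMap K R D * s₃
        - algebraMap K R B * (s₁ + s₂ + s₃)) := by
    rw [hα]; linear_combination (-s₁) * hinv
  rw [this]
  exact I.mul_mem_left _ (I.sub_mem h₂ (I.mul_mem_left _ h₁))

theorem Ideal.four_mul_sum_cubes_sub_mul_mem {R : Type*} [CommRing R] {I : Ideal R}
    {u u' v v' w w' α β : R} (hu : u + u' - α * (w + w') ∈ I) (hv : v + v' - β * (w + w') ∈ I) :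
    4 * (u ^ 3 + u' ^ 3 + v ^ 3 + v' ^ 3 + w ^ 3 + w' ^ 3) - (w + w') *
      ((α ^ 3 + β ^ 3 + 1) * (w + w') ^ 2 + 3 * α * (u - u') ^ 2 + 3 * β * (v - v') ^ 2
        + 3 * (w - w') ^ 2) ∈ I := by
  convert I.add_mem
    (I.mul_mem_right
      ((u + u') ^ 2 + α * (u + u') * (w + w') + α ^ 2 * (w + w') ^ 2 + 3 * (u - u') ^ 2) hu)
    (I.mul_mem_right
      ((v + v') ^ 2 + β * (v + v') * (w + w') + β ^ 2 * (w + w') ^ 2 + 3 * (v - v') ^ 2) hv)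
    using 1
  ring

theorem sum_X_pow_three_sub_mul_mem_of_pairing [CharZero K] (g : Fin 3 × Fin 2 ≃ Fin 6)
    {I : Ideal (MvPolynomial (Fin 6) K)} {α β : K}
    (hu : X (g (0, 0)) + X (g (0, 1)) - C α * (X (g (2, 0)) + X (g (2, 1))) ∈ I)
    (hv : X (g (1, 0)) + X (g (1, 1)) - C β * (X (g (2, 0)) + X (g (2, 1))) ∈ I) :
    ∃ q : MvPolynomial (Fin 6) K, q.IsHomogeneous 2 ∧
      (∑ t, X t ^ 3) - (X (g (2, 0)) + X (g (2, 1))) * q ∈ I := by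
  have hL : ∀ i j, (X i + X j : MvPolynomial (Fin 6) K).IsHomogeneous 1 := fun i j =>
    (isHomogeneous_X K i).add (isHomogeneous_X K j)
  have hL' : ∀ i j, (X i - X j : MvPolynomial (Fin 6) K).IsHomogeneous 1 := fun i j =>
    (isHomogeneous_X K i).sub (isHomogeneous_X K j)
  refine ⟨C 4⁻¹ * (C (α ^ 3 + β ^ 3 + 1) * (X (g (2, 0)) + X (g (2, 1))) ^ 2
    + C (3 * α) * (X (g (0, 0)) - X (g (0, 1))) ^ 2 + C (3 * β) * (X (g (1, 0)) - X (g (1, 1))) ^ 2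
    + C 3 * (X (g (2, 0)) - X (g (2, 1))) ^ 2), ?_, ?_⟩
  · exact ((((((hL _ _).pow 2).C_mul _).add (((hL' _ _).pow 2).C_mul _)).add
      (((hL' _ _).pow 2).C_mul _)).add (((hL' _ _).pow 2).C_mul _)).C_mul _
  · have h4 : ∀ P : MvPolynomial (Fin 6) K, C 4⁻¹ * (4 * P) = P := fun P => by
      rw [← mul_assoc, ← map_ofNat C 4, ← map_mul, inv_mul_cancel₀ (by norm_num : (4 : K) ≠ 0),
        map_one, one_mul]
    convert I.mul_mem_left (C 4⁻¹) (Ideal.four_mul_sum_cubes_sub_mul_mem hu hv) using 1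
    rw [mul_sub, h4, sum_eq_of_pairing g]
    simp only [map_add, map_mul, map_pow, map_one, map_ofNat]
    ring

theorem segreSectionReducible_of_pairing [CharZero K] {y : Fin 6 → K} (g : Fin 3 × Fin 2 ≃ Fin 6)
    (hyg : ∀ i, y (g (i, 0)) = y (g (i, 1))) (hne : y (g (0, 0)) ≠ y (g (1, 0))) :
    SegreSectionReducible y := by
  set I := Ideal.span {∑ t, X t, ∑ t, C (y t) * X t}
  set s : Fin 3 → MvPolynomial (Fin 6) K := fun i => X (g (i, 0)) + X (g (i, 1))
  have h₁ : s 0 + s 1 + s 2 ∈ I := by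
    have : ∑ t, X t ∈ I := Ideal.subset_span (by simp)
    rwa [sum_eq_of_pairing g] at this
  have h₂ : algebraMap K _ (y (g (0, 0))) * s 0 + algebraMap K _ (y (g (1, 0))) * s 1
      + algebraMap K _ (y (g (2, 0))) * s 2 ∈ I := by
    have : ∑ t, C (y t) * X t ∈ I := Ideal.subset_span (by simp)
    rw [sum_eq_of_pairing g] at this
    convert this using 1
    simp only [← hyg, s, algebraMap_eq]
    ring
  have hu := Ideal.sub_algebraMap_mul_mem hne h₁ h₂
  have hv := Ideal.sub_algebraMap_mul_mem (s₁ := s 1) (s₂ := s 0) (s₃ := s 2) (Ne.symm hne)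
    (by rwa [add_comm (s 1)]) (by rwa [add_comm (_ * s 1)])
  obtain ⟨q, hq, hmem⟩ := sum_X_pow_three_sub_mul_mem_of_pairing g hu hv
  exact ⟨_, q, (isHomogeneous_X K _).add (isHomogeneous_X K _), hq, hmem⟩

theorem segreSectionReducible_of_fpf [CharZero K] {y : Fin 6 → K} (hy : y ≠ 0)
    (hsum : ∑ k, y k = 0) {τ : Equiv.Perm (Fin 6)} (hτ : FPF τ) (hyτ : ∀ k, y (τ k) = y k) :
    SegreSectionReducible y := by
  obtain ⟨a, b, hab⟩ := exists_ne_of_sum_eq_zero hy hsum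
  obtain ⟨g, rfl, rfl, hg⟩ := exists_pairing_of_fpf hτ (a := a) (b := b)
    (fun h => hab (by rw [h])) (fun h => hab (by rw [h, hyτ]))
  exact segreSectionReducible_of_pairing g (by simp [hg, hyτ]) hab

theorem SegreSectionReducible.exists_fpf [CharZero K] {y : Fin 6 → K}
    (h : SegreSectionReducible y) : ∃ τ, FPF τ ∧ ∀ k, y (τ k) = y k := by
  obtain ⟨l, q, hl, -, hmem⟩ := h
  obtain ⟨c, rfl⟩ := hl.exists_eq_sum_smul_X
  let M : Matrix (Fin 3) (Fin 6) K := Matrix.of ![fun _ => 1, y, c]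
  let W := LinearMap.ker M.mulVecLin
  have hW : ∀ x ∈ W, ∑ t, x t = 0 ∧ ∑ t, y t * x t = 0 ∧ ∑ t, c t * x t = 0 := by
    intro x hx
    simpa [Fin.forall_fin_succ, M, Matrix.mulVec, dotProduct] using
      congrFun (LinearMap.mem_ker.mp hx)
  have hdim : 3 ≤ finrank K W := by
    change 3 ≤ finrank K (LinearMap.ker M.mulVecLin)
    have := LinearMap.finrank_range_add_finrank_ker M.mulVecLin
    have := Submodule.finrank_le (LinearMap.range M.mulVecLin)
    simp only [finrank_fintype_fun_eq_card, Fintype.card_fin] at *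
    omega
  have hcube : ∀ x ∈ W, ∑ t, x t ^ 3 = 0 := fun x hx => by
    obtain ⟨h₁, h₂, h₃⟩ := hW x hx
    simpa using eval_eq_zero_of_sub_mul_mem_span_pair (x := x) hmem (by simpa) (by simpa)
      (by simpa using h₃)
  obtain ⟨p, idx, hpW, hpiv⟩ := W.exists_pivots 3 hdim
  obtain ⟨g, hg⟩ := exists_pairing_of_pivots hpiv
    (mul_eq_zero_of_pivots hpiv (fun i j k =>
      sum_mul_mul_eq_zero_of_sum_pow_three_eq_zero hcube (hpW i) (hpW j) (hpW k)) (by simp))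
    (fun i => (hW _ (hpW i)).1) (by simp)
  refine exists_fpf_of_pairing g y fun i => ?_
  have := (hW _ (hpW i)).2.1
  rw [hg i] at this
  simpa [mul_sub, sub_eq_zero, Pi.single_apply] using this

end Reducibility

/-- the cubic surface `Σ₃ ∩ H_y` is reducible (the cubic `∑ X_t³` is
congruent to a product of a linear form and a quadratic form modulo the ideal of the
plane `{∑ X_t = 0, ∑ y_t X_t = 0}`) if and only if `y` is invariant under some
fixed-point-free involution of `{0,…,5}`, i.e. `[y]` lies on one of the 15 singular
lines of the Castelnuovo–Richmond quartic. -/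
theorem reducible_hyperplane_sections (y : Fin 6 → ℂ) (hy : y ≠ 0)
    (hsum : (∑ k, y k) = 0) :
    (∃ l q : MvPolynomial (Fin 6) ℂ, l.IsHomogeneous 1 ∧ q.IsHomogeneous 2 ∧
        (∑ t, (X t : MvPolynomial (Fin 6) ℂ) ^ 3) - l * q ∈
          Ideal.span {(∑ t, X t : MvPolynomial (Fin 6) ℂ), ∑ t, C (y t) * X t}) ↔
      ∃ τ : Equiv.Perm (Fin 6), FPF τ ∧ ∀ k, y (τ k) = y k :=
  ⟨SegreSectionReducible.exists_fpf,
    fun ⟨_, hτ, hyτ⟩ => segreSectionReducible_of_fpf hy hsum hτ hyτ⟩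
end

section
/- Let x ∈ ℂ⁶ ∖ {0} with Σ_k x_k = 0 and Σ_k x_k³ = 0, and suppose [x] lies on no Segre plane, i.e. for every fixed-point-free involution τ of {0,…,5} there is an index i with x_i + x_{τ(i)} ≠ 0. Then Σ_k ε^A_k x_k² ≠ 0 for every 3-element subset A ⊆ {0,…,5}; that is, the tangent hyperplane of the Segre cubic Σ₃ at [x] contains none of the 10 nodes of Σ₃. -/
open scoped BigOperators

/-- The vector `ε^A` with coordinate `1` on `A` and `-1` off `A`. -/
noncomputable def eps (A : Finset (Fin 6)) : Fin 6 → ℂ := fun k => if k ∈ A then 1 else -1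

private lemma key (a b c d e f : ℂ) (h1 : a + b + c + d + e + f = 0)
    (h2 : a ^ 2 + b ^ 2 + c ^ 2 = d ^ 2 + e ^ 2 + f ^ 2)
    (h3 : a ^ 3 + b ^ 3 + c ^ 3 + d ^ 3 + e ^ 3 + f ^ 3 = 0) :
    (a + d = 0 ∧ b + e = 0 ∧ c + f = 0) ∨ (a + d = 0 ∧ b + f = 0 ∧ c + e = 0) ∨
    (a + e = 0 ∧ b + d = 0 ∧ c + f = 0) ∨ (a + e = 0 ∧ b + f = 0 ∧ c + d = 0) ∨
    (a + f = 0 ∧ b + d = 0 ∧ c + e = 0) ∨ (a + f = 0 ∧ b + e = 0 ∧ c + d = 0) := by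
  have hroot : (a + d) * (a + e) * (a + f) = 0 := by
    linear_combination (a^2 - a*b - a*c - 2*b^2 + 2*b*c - 2*c^2 + 2*a*d + 2*a*e + 2*a*f
        - b*d - b*e - b*f - c*d - c*e - c*f + d^2 + 2*d*e + 2*d*f + e^2 + 2*e*f + f^2) / 6 * h1
      + (a + d + e + f) / 2 * h2 + (1 / 3 : ℂ) * h3
  rcases mul_eq_zero.mp hroot with h' | hf
  · rcases mul_eq_zero.mp h' with hd | he
    · have h2' : (b + e) * (b + f) = 0 := by
        linear_combination ((b - c + e + f) / 2) * h1 + (1 / 2 : ℂ) * h2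
          + ((-a - b + c + d - e - f) / 2) * hd
      rcases mul_eq_zero.mp h2' with hbe | hbf
      · exact Or.inl ⟨hd, hbe, by linear_combination h1 - hd - hbe⟩
      · exact Or.inr (Or.inl ⟨hd, hbf, by linear_combination h1 - hd - hbf⟩)
    · have h2' : (b + d) * (b + f) = 0 := by
        linear_combination ((b - c + d + f) / 2) * h1 + (1 / 2 : ℂ) * h2
          + ((-a - b + c + e - d - f) / 2) * he
      rcases mul_eq_zero.mp h2' with hbd | hbf
      · exact Or.inr (Or.inr (Or.inl ⟨he, hbd, by linear_combination h1 - he - hbd⟩))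
      · exact Or.inr (Or.inr (Or.inr (Or.inl ⟨he, hbf, by linear_combination h1 - he - hbf⟩)))
  · have h2' : (b + d) * (b + e) = 0 := by
      linear_combination ((b - c + d + e) / 2) * h1 + (1 / 2 : ℂ) * h2
        + ((-a - b + c + f - d - e) / 2) * hf
    rcases mul_eq_zero.mp h2' with hbd | hbe
    · exact Or.inr (Or.inr (Or.inr (Or.inr (Or.inl ⟨hf, hbd, by linear_combination h1 - hf - hbd⟩))))
    · exact Or.inr (Or.inr (Or.inr (Or.inr (Or.inr ⟨hf, hbe, by linear_combination h1 - hf - hbe⟩))))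

private lemma pair (x : Fin 6 → ℂ)
    (hplane : ∀ τ : Equiv.Perm (Fin 6), FPF τ → ∃ p, x p + x (τ p) ≠ 0)
    (i j k l m n : Fin 6)
    (hij : i ≠ j) (hik : i ≠ k) (hil : i ≠ l) (him : i ≠ m) (hin : i ≠ n)
    (hjk : j ≠ k) (hjl : j ≠ l) (hjm : j ≠ m) (hjn : j ≠ n)
    (hkl : k ≠ l) (hkm : k ≠ m) (hkn : k ≠ n)
    (hlm : l ≠ m) (hln : l ≠ n) (hmn : m ≠ n)
    (hcov : ∀ p : Fin 6, p = i ∨ p = j ∨ p = k ∨ p = l ∨ p = m ∨ p = n)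
    (ha : x i + x l = 0) (hb : x j + x m = 0) (hc : x k + x n = 0) : False := by
  set τ : Equiv.Perm (Fin 6) := Equiv.swap i l * (Equiv.swap j m * Equiv.swap k n) with hτ
  have ti : τ i = l := by
    rw [hτ, Equiv.Perm.mul_apply, Equiv.Perm.mul_apply,
      Equiv.swap_apply_of_ne_of_ne hik hin, Equiv.swap_apply_of_ne_of_ne hij him,
      Equiv.swap_apply_left]
  have tj : τ j = m := by
    rw [hτ, Equiv.Perm.mul_apply, Equiv.Perm.mul_apply,
      Equiv.swap_apply_of_ne_of_ne hjk hjn, Equiv.swap_apply_left,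
      Equiv.swap_apply_of_ne_of_ne him.symm hlm.symm]
  have tk : τ k = n := by
    rw [hτ, Equiv.Perm.mul_apply, Equiv.Perm.mul_apply, Equiv.swap_apply_left,
      Equiv.swap_apply_of_ne_of_ne hjn.symm hmn.symm,
      Equiv.swap_apply_of_ne_of_ne hin.symm hln.symm]
  have tl : τ l = i := by
    rw [hτ, Equiv.Perm.mul_apply, Equiv.Perm.mul_apply,
      Equiv.swap_apply_of_ne_of_ne hkl.symm hln, Equiv.swap_apply_of_ne_of_ne hjl.symm hlm,
      Equiv.swap_apply_right]
  have tm : τ m = j := by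
    rw [hτ, Equiv.Perm.mul_apply, Equiv.Perm.mul_apply,
      Equiv.swap_apply_of_ne_of_ne hkm.symm hmn, Equiv.swap_apply_right,
      Equiv.swap_apply_of_ne_of_ne hij.symm hjl]
  have tn : τ n = k := by
    rw [hτ, Equiv.Perm.mul_apply, Equiv.Perm.mul_apply, Equiv.swap_apply_right,
      Equiv.swap_apply_of_ne_of_ne hjk.symm hkm, Equiv.swap_apply_of_ne_of_ne hik.symm hkl]
  have hinv : ∀ p, τ (τ p) = p := by
    intro p
    rcases hcov p with rfl | rfl | rfl | rfl | rfl | rfl <;> simp [ti, tj, tk, tl, tm, tn]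
  have hne : ∀ p, τ p ≠ p := by
    intro p
    rcases hcov p with rfl | rfl | rfl | rfl | rfl | rfl
    · rw [ti]; exact hil.symm
    · rw [tj]; exact hjm.symm
    · rw [tk]; exact hkn.symm
    · rw [tl]; exact hil
    · rw [tm]; exact hjm
    · rw [tn]; exact hkn
  obtain ⟨p, hp⟩ := hplane τ ⟨hinv, hne⟩
  rcases hcov p with rfl | rfl | rfl | rfl | rfl | rfl
  · rw [ti] at hp; exact hp ha
  · rw [tj] at hp; exact hp hb
  · rw [tk] at hp; exact hp hc
  · rw [tl] at hp; exact hp (by linear_combination ha)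
  · rw [tm] at hp; exact hp (by linear_combination hb)
  · rw [tn] at hp; exact hp (by linear_combination hc)

private lemma step (x : Fin 6 → ℂ)
    (hplane : ∀ τ : Equiv.Perm (Fin 6), FPF τ → ∃ p, x p + x (τ p) ≠ 0)
    (i j k l m n : Fin 6)
    (hnd : ([i, j, k, l, m, n] : List (Fin 6)).Nodup)
    (hcov : ∀ p : Fin 6, p = i ∨ p = j ∨ p = k ∨ p = l ∨ p = m ∨ p = n)
    (e1 : x i + x j + x k + x l + x m + x n = 0)
    (e2 : x i ^ 2 + x j ^ 2 + x k ^ 2 = x l ^ 2 + x m ^ 2 + x n ^ 2)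
    (e3 : x i ^ 3 + x j ^ 3 + x k ^ 3 + x l ^ 3 + x m ^ 3 + x n ^ 3 = 0) : False := by
  simp only [List.nodup_cons, List.mem_cons, List.not_mem_nil, or_false, not_or,
    List.nodup_nil, not_false_iff, and_true] at hnd
  obtain ⟨⟨hij, hik, hil, him, hin⟩, ⟨hjk, hjl, hjm, hjn⟩, ⟨hkl, hkm, hkn⟩, ⟨hlm, hln⟩, hmn⟩ := hnd
  rcases key (x i) (x j) (x k) (x l) (x m) (x n) e1 e2 e3 with
    ⟨ha, hb, hc⟩ | ⟨ha, hb, hc⟩ | ⟨ha, hb, hc⟩ | ⟨ha, hb, hc⟩ | ⟨ha, hb, hc⟩ | ⟨ha, hb, hc⟩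
  · exact pair x hplane i j k l m n hij hik hil him hin hjk hjl hjm hjn hkl hkm hkn hlm hln hmn
      (fun p => by have := hcov p; tauto) ha hb hc
  · exact pair x hplane i j k l n m hij hik hil hin him hjk hjl hjn hjm hkl hkn hkm hln hlm (Ne.symm hmn)
      (fun p => by have := hcov p; tauto) ha hb hc
  · exact pair x hplane i j k m l n hij hik him hil hin hjk hjm hjl hjn hkm hkl hkn (Ne.symm hlm) hmn hln
      (fun p => by have := hcov p; tauto) ha hb hc
  · exact pair x hplane i j k m n l hij hik him hin hil hjk hjm hjn hjl hkm hkn hkl hmn (Ne.symm hlm) (Ne.symm hln)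
      (fun p => by have := hcov p; tauto) ha hb hc
  · exact pair x hplane i j k n l m hij hik hin hil him hjk hjn hjl hjm hkn hkl hkm (Ne.symm hln) (Ne.symm hmn) hlm
      (fun p => by have := hcov p; tauto) ha hb hc
  · exact pair x hplane i j k n m l hij hik hin him hil hjk hjn hjm hjl hkn hkm hkl (Ne.symm hmn) (Ne.symm hln) (Ne.symm hlm)
      (fun p => by have := hcov p; tauto) ha hb hc

/-- if `[x]` is a point of the Segre cubic lying on no Segre plane, then
the tangent hyperplane of the Segre cubic at `[x]` contains none of the 10 nodes:
`∑ ε^A_k x_k² ≠ 0` for every 3-element subset `A`. -/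
theorem tangent_hyperplane_avoids_nodes (x : Fin 6 → ℂ) (hx : x ≠ 0)
    (h1 : (∑ k, x k) = 0) (h3 : (∑ k, (x k) ^ 3) = 0)
    (hplane : ∀ τ : Equiv.Perm (Fin 6), FPF τ → ∃ i, x i + x (τ i) ≠ 0) :
    ∀ A : Finset (Fin 6), A.card = 3 → (∑ k, eps A k * (x k) ^ 2) ≠ 0 := by
  intro A hA3 hcon
  rw [Fin.sum_univ_six] at h1 h3 hcon
  have h20 : ∀ B : Finset (Fin 6), B.card = 3 →
      B = {0, 1, 2} ∨
      B = {0, 1, 3} ∨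
      B = {0, 1, 4} ∨
      B = {0, 1, 5} ∨
      B = {0, 2, 3} ∨
      B = {0, 2, 4} ∨
      B = {0, 2, 5} ∨
      B = {0, 3, 4} ∨
      B = {0, 3, 5} ∨
      B = {0, 4, 5} ∨
      B = {1, 2, 3} ∨
      B = {1, 2, 4} ∨
      B = {1, 2, 5} ∨
      B = {1, 3, 4} ∨
      B = {1, 3, 5} ∨
      B = {1, 4, 5} ∨
      B = {2, 3, 4} ∨
      B = {2, 3, 5} ∨
      B = {2, 4, 5} ∨
      B = {3, 4, 5} := by decide
  rcases h20 A hA3 with rfl | rfl | rfl | rfl | rfl | rfl | rfl | rfl | rfl | rfl | rfl | rfl | rfl | rfl | rfl | rfl | rfl | rfl | rfl | rfl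
  · simp +decide only [eps] at hcon
    norm_num at hcon
    exact step x hplane 0 1 2 3 4 5 (by decide) (by decide)
      (by linear_combination h1) (by linear_combination hcon) (by linear_combination h3)
  · simp +decide only [eps] at hcon
    norm_num at hcon
    exact step x hplane 0 1 3 2 4 5 (by decide) (by decide)
      (by linear_combination h1) (by linear_combination hcon) (by linear_combination h3)
  · simp +decide only [eps] at hcon
    norm_num at hcon
    exact step x hplane 0 1 4 2 3 5 (by decide) (by decide)
      (by linear_combination h1) (by linear_combination hcon) (by linear_combination h3)
  · simp +decide only [eps] at hcon
    norm_num at hcon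
    exact step x hplane 0 1 5 2 3 4 (by decide) (by decide)
      (by linear_combination h1) (by linear_combination hcon) (by linear_combination h3)
  · simp +decide only [eps] at hcon
    norm_num at hcon
    exact step x hplane 0 2 3 1 4 5 (by decide) (by decide)
      (by linear_combination h1) (by linear_combination hcon) (by linear_combination h3)
  · simp +decide only [eps] at hcon
    norm_num at hcon
    exact step x hplane 0 2 4 1 3 5 (by decide) (by decide)
      (by linear_combination h1) (by linear_combination hcon) (by linear_combination h3)
  · simp +decide only [eps] at hcon
    norm_num at hcon
    exact step x hplane 0 2 5 1 3 4 (by decide) (by decide)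
      (by linear_combination h1) (by linear_combination hcon) (by linear_combination h3)
  · simp +decide only [eps] at hcon
    norm_num at hcon
    exact step x hplane 0 3 4 1 2 5 (by decide) (by decide)
      (by linear_combination h1) (by linear_combination hcon) (by linear_combination h3)
  · simp +decide only [eps] at hcon
    norm_num at hcon
    exact step x hplane 0 3 5 1 2 4 (by decide) (by decide)
      (by linear_combination h1) (by linear_combination hcon) (by linear_combination h3)
  · simp +decide only [eps] at hcon
    norm_num at hcon
    exact step x hplane 0 4 5 1 2 3 (by decide) (by decide)
      (by linear_combination h1) (by linear_combination hcon) (by linear_combination h3)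
  · simp +decide only [eps] at hcon
    norm_num at hcon
    exact step x hplane 1 2 3 0 4 5 (by decide) (by decide)
      (by linear_combination h1) (by linear_combination hcon) (by linear_combination h3)
  · simp +decide only [eps] at hcon
    norm_num at hcon
    exact step x hplane 1 2 4 0 3 5 (by decide) (by decide)
      (by linear_combination h1) (by linear_combination hcon) (by linear_combination h3)
  · simp +decide only [eps] at hcon
    norm_num at hcon
    exact step x hplane 1 2 5 0 3 4 (by decide) (by decide)
      (by linear_combination h1) (by linear_combination hcon) (by linear_combination h3)
  · simp +decide only [eps] at hcon
    norm_num at hcon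
    exact step x hplane 1 3 4 0 2 5 (by decide) (by decide)
      (by linear_combination h1) (by linear_combination hcon) (by linear_combination h3)
  · simp +decide only [eps] at hcon
    norm_num at hcon
    exact step x hplane 1 3 5 0 2 4 (by decide) (by decide)
      (by linear_combination h1) (by linear_combination hcon) (by linear_combination h3)
  · simp +decide only [eps] at hcon
    norm_num at hcon
    exact step x hplane 1 4 5 0 2 3 (by decide) (by decide)
      (by linear_combination h1) (by linear_combination hcon) (by linear_combination h3)
  · simp +decide only [eps] at hcon
    norm_num at hcon
    exact step x hplane 2 3 4 0 1 5 (by decide) (by decide)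
      (by linear_combination h1) (by linear_combination hcon) (by linear_combination h3)
  · simp +decide only [eps] at hcon
    norm_num at hcon
    exact step x hplane 2 3 5 0 1 4 (by decide) (by decide)
      (by linear_combination h1) (by linear_combination hcon) (by linear_combination h3)
  · simp +decide only [eps] at hcon
    norm_num at hcon
    exact step x hplane 2 4 5 0 1 3 (by decide) (by decide)
      (by linear_combination h1) (by linear_combination hcon) (by linear_combination h3)
  · simp +decide only [eps] at hcon
    norm_num at hcon
    exact step x hplane 3 4 5 0 1 2 (by decide) (by decide)
      (by linear_combination h1) (by linear_combination hcon) (by linear_combination h3)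
end

section
/- Let p ∈ ℂ⁶ ∖ {0} with Σ_k p_k = 0, F(p) = 0, and Σ_k ε^A_k p_k ≠ 0 for every 3-element subset A ⊆ {0,…,5} (i.e. [p] lies on the Castelnuovo–Richmond quartic but on none of the 10 hyperplanes dual to the nodes of the Segre cubic). Set g = ∇F(p). If x ∈ ℂ⁶ ∖ {0} satisfies Σ_k x_k = 0, F(x) = 0, Σ_k g_k x_k = 0, there is no fixed-point-free involution τ with x_k = x_{τ(k)} for all k (i.e. [x] is not a singular point of CR₄), and the vectors (1,…,1), ∇F(x), g are linearly dependent, then [x] = [p]. In other words, the tangent hyperplane of CR₄ at such a point p is tangent to CR₄ only at p. -/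
open scoped BigOperators

/-- The quartic `F(x) = (∑ x_k²)² - 4 ∑ x_k⁴` defining the Castelnuovo–Richmond quartic. -/
noncomputable def Fq (x : Fin 6 → ℂ) : ℂ := (∑ k, (x k) ^ 2) ^ 2 - 4 * (∑ k, (x k) ^ 4)

/-- The gradient `∇F(x) = (4 x_k ∑ x_j² - 16 x_k³)_k`. -/
noncomputable def gradF (x : Fin 6 → ℂ) : Fin 6 → ℂ :=
  fun k => 4 * x k * (∑ j, (x j) ^ 2) - 16 * (x k) ^ 3

noncomputable def wv (x : Fin 6 → ℂ) : Fin 6 → ℂ :=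
  fun k => 3 * (∑ j, (x j) ^ 2) * x k - 12 * (x k) ^ 3 + 2 * (∑ j, (x j) ^ 3)

noncomputable def zv (x : Fin 6 → ℂ) : Fin 6 → ℂ :=
  fun k => 6 * (wv x k) ^ 2 - ∑ j, (wv x j) ^ 2

lemma key_s18 (x : Fin 6 → ℂ) (hs : (∑ k, x k) = 0) (hF : Fq x = 0) :
    zv x 0 * x 1 = zv x 1 * x 0 := by
  simp only [Fq, Fin.sum_univ_six] at hs hF
  simp only [zv, wv, Fin.sum_univ_six]
  linear_combination (-45*x 1*x 5 ^ 5 + 33*x 1*x 4*x 5 ^ 4 + 54*x 1*x 4 ^ 2*x 5 ^ 3 + 18*x 1*x 4 ^ 3*x 5 ^ 2 - 21*x 1*x 4 ^ 4*x 5 + 9*x 1*x 4 ^ 5 + 33*x 1*x 3*x 5 ^ 4 - 12*x 1*x 3*x 4*x 5 ^ 3 - 54*x 1*x 3*x 4 ^ 2*x 5 ^ 2 - 12*x 1*x 3*x 4 ^ 3*x 5 + 33*x 1*x 3*x 4 ^ 4 + 54*x 1*x 3 ^ 2*x 5 ^ 3 - 54*x 1*x 3 ^ 2*x 4*x 5 ^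 2 - 18*x 1*x 3 ^ 2*x 4 ^ 2*x 5 + 18*x 1*x 3 ^ 2*x 4 ^ 3 + 18*x 1*x 3 ^ 3*x 5 ^ 2 - 12*x 1*x 3 ^ 3*x 4*x 5 + 18*x 1*x 3 ^ 3*x 4 ^ 2 - 21*x 1*x 3 ^ 4*x 5 + 33*x 1*x 3 ^ 4*x 4 + 9*x 1*x 3 ^ 5 + 33*x 1*x 2*x 5 ^ 4 - 12*x 1*x 2*x 4*x 5 ^ 3 - 54*x 1*x 2*x 4 ^ 2*x 5 ^ 2 - 12*x 1*x 2*x 4 ^ 3*x 5 + 33*x 1*x 2*x 4 ^ 4 - 12*x 1*x 2*x 3*x 5 ^ 3 + 36*x 1*x 2*x 3*x 4*x 5 ^ 2 + 36*x 1*x 2*x 3*x 4 ^ 2*x 5 - 12*x 1*x 2*x 3*x 4 ^ 3 - 54*x 1*x 2*x 3 ^ 2*x 5 ^ 2 + 36*x 1*x 2*x 3 ^ 2*x 4*x 5 - 54*x 1*x 2*x 3 ^ 2*x 4 ^ 2 - 12*x 1*x 2*x 3 ^ 3*x 5 - 12*x 1*x 2*x 3 ^ 3*x 4 + 33*x 1*x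 2*x 3 ^ 4 + 54*x 1*x 2 ^ 2*x 5 ^ 3 - 54*x 1*x 2 ^ 2*x 4*x 5 ^ 2 - 18*x 1*x 2 ^ 2*x 4 ^ 2*x 5 + 18*x 1*x 2 ^ 2*x 4 ^ 3 - 54*x 1*x 2 ^ 2*x 3*x 5 ^ 2 + 36*x 1*x 2 ^ 2*x 3*x 4*x 5 - 54*x 1*x 2 ^ 2*x 3*x 4 ^ 2 - 18*x 1*x 2 ^ 2*x 3 ^ 2*x 5 - 54*x 1*x 2 ^ 2*x 3 ^ 2*x 4 + 18*x 1*x 2 ^ 2*x 3 ^ 3 + 18*x 1*x 2 ^ 3*x 5 ^ 2 - 12*x 1*x 2 ^ 3*x 4*x 5 + 18*x 1*x 2 ^ 3*x 4 ^ 2 - 12*x 1*x 2 ^ 3*x 3*x 5 - 12*x 1*x 2 ^ 3*x 3*x 4 + 18*x 1*x 2 ^ 3*x 3 ^ 2 - 21*x 1*x 2 ^ 4*x 5 + 33*x 1*x 2 ^ 4*x 4 + 33*x 1*x 2 ^ 4*x 3 + 9*x 1*x 2 ^ 5 + 33*x 1 ^ 2*x 5 ^ 4 - 12*x 1 ^ 2*x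 4*x 5 ^ 3 - 54*x 1 ^ 2*x 4 ^ 2*x 5 ^ 2 - 12*x 1 ^ 2*x 4 ^ 3*x 5 + 33*x 1 ^ 2*x 4 ^ 4 - 12*x 1 ^ 2*x 3*x 5 ^ 3 + 36*x 1 ^ 2*x 3*x 4*x 5 ^ 2 + 36*x 1 ^ 2*x 3*x 4 ^ 2*x 5 - 12*x 1 ^ 2*x 3*x 4 ^ 3 - 54*x 1 ^ 2*x 3 ^ 2*x 5 ^ 2 + 36*x 1 ^ 2*x 3 ^ 2*x 4*x 5 - 54*x 1 ^ 2*x 3 ^ 2*x 4 ^ 2 - 12*x 1 ^ 2*x 3 ^ 3*x 5 - 12*x 1 ^ 2*x 3 ^ 3*x 4 + 33*x 1 ^ 2*x 3 ^ 4 - 12*x 1 ^ 2*x 2*x 5 ^ 3 + 36*x 1 ^ 2*x 2*x 4*x 5 ^ 2 + 36*x 1 ^ 2*x 2*x 4 ^ 2*x 5 - 12*x 1 ^ 2*x 2*x 4 ^ 3 + 36*x 1 ^ 2*x 2*x 3*x 5 ^ 2 - 144*x 1 ^ 2*x 2*x 3*x 4*x 5 + 36*x 1 ^ 2*x 2*x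 3*x 4 ^ 2 + 36*x 1 ^ 2*x 2*x 3 ^ 2*x 5 + 36*x 1 ^ 2*x 2*x 3 ^ 2*x 4 - 12*x 1 ^ 2*x 2*x 3 ^ 3 - 54*x 1 ^ 2*x 2 ^ 2*x 5 ^ 2 + 36*x 1 ^ 2*x 2 ^ 2*x 4*x 5 - 54*x 1 ^ 2*x 2 ^ 2*x 4 ^ 2 + 36*x 1 ^ 2*x 2 ^ 2*x 3*x 5 + 36*x 1 ^ 2*x 2 ^ 2*x 3*x 4 - 54*x 1 ^ 2*x 2 ^ 2*x 3 ^ 2 - 12*x 1 ^ 2*x 2 ^ 3*x 5 - 12*x 1 ^ 2*x 2 ^ 3*x 4 - 12*x 1 ^ 2*x 2 ^ 3*x 3 + 33*x 1 ^ 2*x 2 ^ 4 + 54*x 1 ^ 3*x 5 ^ 3 - 54*x 1 ^ 3*x 4*x 5 ^ 2 - 18*x 1 ^ 3*x 4 ^ 2*x 5 + 18*x 1 ^ 3*x 4 ^ 3 - 54*x 1 ^ 3*x 3*x 5 ^ 2 + 36*x 1 ^ 3*x 3*x 4*x 5 - 54*x 1 ^ 3*x 3*x 4 ^ 2 - 18*x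 1 ^ 3*x 3 ^ 2*x 5 - 54*x 1 ^ 3*x 3 ^ 2*x 4 + 18*x 1 ^ 3*x 3 ^ 3 - 54*x 1 ^ 3*x 2*x 5 ^ 2 + 36*x 1 ^ 3*x 2*x 4*x 5 - 54*x 1 ^ 3*x 2*x 4 ^ 2 + 36*x 1 ^ 3*x 2*x 3*x 5 + 36*x 1 ^ 3*x 2*x 3*x 4 - 54*x 1 ^ 3*x 2*x 3 ^ 2 - 18*x 1 ^ 3*x 2 ^ 2*x 5 - 54*x 1 ^ 3*x 2 ^ 2*x 4 - 54*x 1 ^ 3*x 2 ^ 2*x 3 + 18*x 1 ^ 3*x 2 ^ 3 + 18*x 1 ^ 4*x 5 ^ 2 - 12*x 1 ^ 4*x 4*x 5 + 18*x 1 ^ 4*x 4 ^ 2 - 12*x 1 ^ 4*x 3*x 5 - 12*x 1 ^ 4*x 3*x 4 + 18*x 1 ^ 4*x 3 ^ 2 - 12*x 1 ^ 4*x 2*x 5 - 12*x 1 ^ 4*x 2*x 4 - 12*x 1 ^ 4*x 2*x 3 + 18*x 1 ^ 4*x 2 ^ 2 - 21*x 1 ^ 5*x 5 + 33*x 1 ^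 5*x 4 + 33*x 1 ^ 5*x 3 + 33*x 1 ^ 5*x 2 + 9*x 1 ^ 6 + 45*x 0*x 5 ^ 5 - 33*x 0*x 4*x 5 ^ 4 - 54*x 0*x 4 ^ 2*x 5 ^ 3 - 18*x 0*x 4 ^ 3*x 5 ^ 2 + 21*x 0*x 4 ^ 4*x 5 - 9*x 0*x 4 ^ 5 - 33*x 0*x 3*x 5 ^ 4 + 12*x 0*x 3*x 4*x 5 ^ 3 + 54*x 0*x 3*x 4 ^ 2*x 5 ^ 2 + 12*x 0*x 3*x 4 ^ 3*x 5 - 33*x 0*x 3*x 4 ^ 4 - 54*x 0*x 3 ^ 2*x 5 ^ 3 + 54*x 0*x 3 ^ 2*x 4*x 5 ^ 2 + 18*x 0*x 3 ^ 2*x 4 ^ 2*x 5 - 18*x 0*x 3 ^ 2*x 4 ^ 3 - 18*x 0*x 3 ^ 3*x 5 ^ 2 + 12*x 0*x 3 ^ 3*x 4*x 5 - 18*x 0*x 3 ^ 3*x 4 ^ 2 + 21*x 0*x 3 ^ 4*x 5 - 33*x 0*x 3 ^ 4*x 4 - 9*x 0*x 3 ^ 5 - 33*x 0*x 2*x 5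 ^ 4 + 12*x 0*x 2*x 4*x 5 ^ 3 + 54*x 0*x 2*x 4 ^ 2*x 5 ^ 2 + 12*x 0*x 2*x 4 ^ 3*x 5 - 33*x 0*x 2*x 4 ^ 4 + 12*x 0*x 2*x 3*x 5 ^ 3 - 36*x 0*x 2*x 3*x 4*x 5 ^ 2 - 36*x 0*x 2*x 3*x 4 ^ 2*x 5 + 12*x 0*x 2*x 3*x 4 ^ 3 + 54*x 0*x 2*x 3 ^ 2*x 5 ^ 2 - 36*x 0*x 2*x 3 ^ 2*x 4*x 5 + 54*x 0*x 2*x 3 ^ 2*x 4 ^ 2 + 12*x 0*x 2*x 3 ^ 3*x 5 + 12*x 0*x 2*x 3 ^ 3*x 4 - 33*x 0*x 2*x 3 ^ 4 - 54*x 0*x 2 ^ 2*x 5 ^ 3 + 54*x 0*x 2 ^ 2*x 4*x 5 ^ 2 + 18*x 0*x 2 ^ 2*x 4 ^ 2*x 5 - 18*x 0*x 2 ^ 2*x 4 ^ 3 + 54*x 0*x 2 ^ 2*x 3*x 5 ^ 2 - 36*x 0*x 2 ^ 2*x 3*x 4*x 5 + 54*x 0*x 2 ^ 2*x 3*x 4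 ^ 2 + 18*x 0*x 2 ^ 2*x 3 ^ 2*x 5 + 54*x 0*x 2 ^ 2*x 3 ^ 2*x 4 - 18*x 0*x 2 ^ 2*x 3 ^ 3 - 18*x 0*x 2 ^ 3*x 5 ^ 2 + 12*x 0*x 2 ^ 3*x 4*x 5 - 18*x 0*x 2 ^ 3*x 4 ^ 2 + 12*x 0*x 2 ^ 3*x 3*x 5 + 12*x 0*x 2 ^ 3*x 3*x 4 - 18*x 0*x 2 ^ 3*x 3 ^ 2 + 21*x 0*x 2 ^ 4*x 5 - 33*x 0*x 2 ^ 4*x 4 - 33*x 0*x 2 ^ 4*x 3 - 9*x 0*x 2 ^ 5 + 42*x 0*x 1 ^ 2*x 5 ^ 3 - 18*x 0*x 1 ^ 2*x 4*x 5 ^ 2 - 54*x 0*x 1 ^ 2*x 4 ^ 2*x 5 + 78*x 0*x 1 ^ 2*x 4 ^ 3 - 18*x 0*x 1 ^ 2*x 3*x 5 ^ 2 + 36*x 0*x 1 ^ 2*x 3*x 4*x 5 - 18*x 0*x 1 ^ 2*x 3*x 4 ^ 2 - 54*x 0*x 1 ^ 2*x 3 ^ 2*x 5 - 18*x 0*x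 1 ^ 2*x 3 ^ 2*x 4 + 78*x 0*x 1 ^ 2*x 3 ^ 3 - 18*x 0*x 1 ^ 2*x 2*x 5 ^ 2 + 36*x 0*x 1 ^ 2*x 2*x 4*x 5 - 18*x 0*x 1 ^ 2*x 2*x 4 ^ 2 + 36*x 0*x 1 ^ 2*x 2*x 3*x 5 + 36*x 0*x 1 ^ 2*x 2*x 3*x 4 - 18*x 0*x 1 ^ 2*x 2*x 3 ^ 2 - 54*x 0*x 1 ^ 2*x 2 ^ 2*x 5 - 18*x 0*x 1 ^ 2*x 2 ^ 2*x 4 - 18*x 0*x 1 ^ 2*x 2 ^ 2*x 3 + 78*x 0*x 1 ^ 2*x 2 ^ 3 + 108*x 0*x 1 ^ 3*x 5 ^ 2 - 24*x 0*x 1 ^ 3*x 4*x 5 + 108*x 0*x 1 ^ 3*x 4 ^ 2 - 24*x 0*x 1 ^ 3*x 3*x 5 - 24*x 0*x 1 ^ 3*x 3*x 4 + 108*x 0*x 1 ^ 3*x 3 ^ 2 - 24*x 0*x 1 ^ 3*x 2*x 5 - 24*x 0*x 1 ^ 3*x 2*x 4 - 24*x 0*x 1 ^ 3*x 2*x 3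 + 108*x 0*x 1 ^ 3*x 2 ^ 2 + 45*x 0*x 1 ^ 4*x 5 - 9*x 0*x 1 ^ 4*x 4 - 9*x 0*x 1 ^ 4*x 3 - 9*x 0*x 1 ^ 4*x 2 - 12*x 0*x 1 ^ 5 - 33*x 0 ^ 2*x 5 ^ 4 + 12*x 0 ^ 2*x 4*x 5 ^ 3 + 54*x 0 ^ 2*x 4 ^ 2*x 5 ^ 2 + 12*x 0 ^ 2*x 4 ^ 3*x 5 - 33*x 0 ^ 2*x 4 ^ 4 + 12*x 0 ^ 2*x 3*x 5 ^ 3 - 36*x 0 ^ 2*x 3*x 4*x 5 ^ 2 - 36*x 0 ^ 2*x 3*x 4 ^ 2*x 5 + 12*x 0 ^ 2*x 3*x 4 ^ 3 + 54*x 0 ^ 2*x 3 ^ 2*x 5 ^ 2 - 36*x 0 ^ 2*x 3 ^ 2*x 4*x 5 + 54*x 0 ^ 2*x 3 ^ 2*x 4 ^ 2 + 12*x 0 ^ 2*x 3 ^ 3*x 5 + 12*x 0 ^ 2*x 3 ^ 3*x 4 - 33*x 0 ^ 2*x 3 ^ 4 + 12*x 0 ^ 2*x 2*x 5 ^ 3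 - 36*x 0 ^ 2*x 2*x 4*x 5 ^ 2 - 36*x 0 ^ 2*x 2*x 4 ^ 2*x 5 + 12*x 0 ^ 2*x 2*x 4 ^ 3 - 36*x 0 ^ 2*x 2*x 3*x 5 ^ 2 + 144*x 0 ^ 2*x 2*x 3*x 4*x 5 - 36*x 0 ^ 2*x 2*x 3*x 4 ^ 2 - 36*x 0 ^ 2*x 2*x 3 ^ 2*x 5 - 36*x 0 ^ 2*x 2*x 3 ^ 2*x 4 + 12*x 0 ^ 2*x 2*x 3 ^ 3 + 54*x 0 ^ 2*x 2 ^ 2*x 5 ^ 2 - 36*x 0 ^ 2*x 2 ^ 2*x 4*x 5 + 54*x 0 ^ 2*x 2 ^ 2*x 4 ^ 2 - 36*x 0 ^ 2*x 2 ^ 2*x 3*x 5 - 36*x 0 ^ 2*x 2 ^ 2*x 3*x 4 + 54*x 0 ^ 2*x 2 ^ 2*x 3 ^ 2 + 12*x 0 ^ 2*x 2 ^ 3*x 5 + 12*x 0 ^ 2*x 2 ^ 3*x 4 + 12*x 0 ^ 2*x 2 ^ 3*x 3 - 33*x 0 ^ 2*x 2 ^ 4 - 42*x 0 ^ 2*x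 1*x 5 ^ 3 + 18*x 0 ^ 2*x 1*x 4*x 5 ^ 2 + 54*x 0 ^ 2*x 1*x 4 ^ 2*x 5 - 78*x 0 ^ 2*x 1*x 4 ^ 3 + 18*x 0 ^ 2*x 1*x 3*x 5 ^ 2 - 36*x 0 ^ 2*x 1*x 3*x 4*x 5 + 18*x 0 ^ 2*x 1*x 3*x 4 ^ 2 + 54*x 0 ^ 2*x 1*x 3 ^ 2*x 5 + 18*x 0 ^ 2*x 1*x 3 ^ 2*x 4 - 78*x 0 ^ 2*x 1*x 3 ^ 3 + 18*x 0 ^ 2*x 1*x 2*x 5 ^ 2 - 36*x 0 ^ 2*x 1*x 2*x 4*x 5 + 18*x 0 ^ 2*x 1*x 2*x 4 ^ 2 - 36*x 0 ^ 2*x 1*x 2*x 3*x 5 - 36*x 0 ^ 2*x 1*x 2*x 3*x 4 + 18*x 0 ^ 2*x 1*x 2*x 3 ^ 2 + 54*x 0 ^ 2*x 1*x 2 ^ 2*x 5 + 18*x 0 ^ 2*x 1*x 2 ^ 2*x 4 + 18*x 0 ^ 2*x 1*x 2 ^ 2*x 3 - 78*x 0 ^ 2*x 1*x 2 ^ 3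 + 30*x 0 ^ 2*x 1 ^ 3*x 5 - 6*x 0 ^ 2*x 1 ^ 3*x 4 - 6*x 0 ^ 2*x 1 ^ 3*x 3 - 6*x 0 ^ 2*x 1 ^ 3*x 2 - 87*x 0 ^ 2*x 1 ^ 4 - 54*x 0 ^ 3*x 5 ^ 3 + 54*x 0 ^ 3*x 4*x 5 ^ 2 + 18*x 0 ^ 3*x 4 ^ 2*x 5 - 18*x 0 ^ 3*x 4 ^ 3 + 54*x 0 ^ 3*x 3*x 5 ^ 2 - 36*x 0 ^ 3*x 3*x 4*x 5 + 54*x 0 ^ 3*x 3*x 4 ^ 2 + 18*x 0 ^ 3*x 3 ^ 2*x 5 + 54*x 0 ^ 3*x 3 ^ 2*x 4 - 18*x 0 ^ 3*x 3 ^ 3 + 54*x 0 ^ 3*x 2*x 5 ^ 2 - 36*x 0 ^ 3*x 2*x 4*x 5 + 54*x 0 ^ 3*x 2*x 4 ^ 2 - 36*x 0 ^ 3*x 2*x 3*x 5 - 36*x 0 ^ 3*x 2*x 3*x 4 + 54*x 0 ^ 3*x 2*x 3 ^ 2 + 18*x 0 ^ 3*x 2 ^ 2*x 5 + 54*x 0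 ^ 3*x 2 ^ 2*x 4 + 54*x 0 ^ 3*x 2 ^ 2*x 3 - 18*x 0 ^ 3*x 2 ^ 3 - 108*x 0 ^ 3*x 1*x 5 ^ 2 + 24*x 0 ^ 3*x 1*x 4*x 5 - 108*x 0 ^ 3*x 1*x 4 ^ 2 + 24*x 0 ^ 3*x 1*x 3*x 5 + 24*x 0 ^ 3*x 1*x 3*x 4 - 108*x 0 ^ 3*x 1*x 3 ^ 2 + 24*x 0 ^ 3*x 1*x 2*x 5 + 24*x 0 ^ 3*x 1*x 2*x 4 + 24*x 0 ^ 3*x 1*x 2*x 3 - 108*x 0 ^ 3*x 1*x 2 ^ 2 - 30*x 0 ^ 3*x 1 ^ 2*x 5 + 6*x 0 ^ 3*x 1 ^ 2*x 4 + 6*x 0 ^ 3*x 1 ^ 2*x 3 + 6*x 0 ^ 3*x 1 ^ 2*x 2 - 18*x 0 ^ 4*x 5 ^ 2 + 12*x 0 ^ 4*x 4*x 5 - 18*x 0 ^ 4*x 4 ^ 2 + 12*x 0 ^ 4*x 3*x 5 + 12*x 0 ^ 4*x 3*x 4 - 18*x 0 ^ 4*x 3 ^ 2 + 12*x 0 ^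 4*x 2*x 5 + 12*x 0 ^ 4*x 2*x 4 + 12*x 0 ^ 4*x 2*x 3 - 18*x 0 ^ 4*x 2 ^ 2 - 45*x 0 ^ 4*x 1*x 5 + 9*x 0 ^ 4*x 1*x 4 + 9*x 0 ^ 4*x 1*x 3 + 9*x 0 ^ 4*x 1*x 2 + 87*x 0 ^ 4*x 1 ^ 2 + 21*x 0 ^ 5*x 5 - 33*x 0 ^ 5*x 4 - 33*x 0 ^ 5*x 3 - 33*x 0 ^ 5*x 2 + 12*x 0 ^ 5*x 1 - 9*x 0 ^ 6) * hs + (18*x 1*x 4 ^ 2 + 18*x 1*x 3*x 4 + 18*x 1*x 3 ^ 2 + 18*x 1*x 2*x 4 + 18*x 1*x 2*x 3 + 18*x 1*x 2 ^ 2 + 18*x 1 ^ 2*x 4 + 18*x 1 ^ 2*x 3 + 18*x 1 ^ 2*x 2 + 18*x 1 ^ 3 - 18*x 0*x 4 ^ 2 - 18*x 0*x 3*x 4 - 18*x 0*x 3 ^ 2 - 18*x 0*x 2*x 4 - 18*x 0*x 2*x 3 - 18*x 0*x 2 ^ 2 + 54*x 0*x 1 ^ 2 - 18*x 0 ^ 2*x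 4 - 18*x 0 ^ 2*x 3 - 18*x 0 ^ 2*x 2 - 54*x 0 ^ 2*x 1 - 18*x 0 ^ 3) * hF

lemma wv_comp (x : Fin 6 → ℂ) (σ : Equiv.Perm (Fin 6)) (k : Fin 6) :
    wv (x ∘ σ) k = wv x (σ k) := by
  simp only [wv, Function.comp_apply]
  rw [Equiv.sum_comp σ (fun j => x j ^ 2), Equiv.sum_comp σ (fun j => x j ^ 3)]

lemma zv_comp (x : Fin 6 → ℂ) (σ : Equiv.Perm (Fin 6)) (k : Fin 6) :
    zv (x ∘ σ) k = zv x (σ k) := by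
  simp only [zv, wv_comp]
  rw [Equiv.sum_comp σ (fun j => wv x j ^ 2)]

lemma Fq_comp (x : Fin 6 → ℂ) (σ : Equiv.Perm (Fin 6)) : Fq (x ∘ σ) = Fq x := by
  simp only [Fq, Function.comp_apply]
  rw [Equiv.sum_comp σ (fun j => x j ^ 2), Equiv.sum_comp σ (fun j => x j ^ 4)]

lemma cross (x : Fin 6 → ℂ) (hs : (∑ k, x k) = 0) (hF : Fq x = 0) (k j : Fin 6) :
    zv x k * x j = zv x j * x k := by
  rcases eq_or_ne k j with rfl | hkj
  · rfl
  · set σ1 := Equiv.swap (0 : Fin 6) k with hσ1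
    have hj' : σ1 j ≠ 0 := by
      intro h
      have h2 : j = k := by
        have h3 := congrArg σ1 h
        simpa [hσ1, Equiv.swap_apply_self, Equiv.swap_apply_left] using h3
      exact hkj h2.symm
    set σ : Equiv.Perm (Fin 6) := σ1 * Equiv.swap 1 (σ1 j) with hσ
    have hσ0 : σ 0 = k := by
      rw [hσ, Equiv.Perm.mul_apply, Equiv.swap_apply_of_ne_of_ne (by decide) (Ne.symm hj'),
        hσ1, Equiv.swap_apply_left]
    have hσ1j : σ 1 = j := by
      rw [hσ, Equiv.Perm.mul_apply, Equiv.swap_apply_left]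
      simp [hσ1]
    have hk := key_s18 (x ∘ σ)
      (by simp only [Function.comp_apply]; rw [Equiv.sum_comp σ x]; exact hs)
      (by rw [Fq_comp]; exact hF)
    rw [zv_comp, zv_comp, Function.comp_apply, Function.comp_apply, hσ0, hσ1j] at hk
    exact hk

lemma sum_wv (x : Fin 6 → ℂ) (hs : (∑ k, x k) = 0) : (∑ k, wv x k) = 0 := by
  simp only [Fin.sum_univ_six] at hs ⊢
  simp only [wv, Fin.sum_univ_six]
  linear_combination (3 * (x 0 ^ 2 + x 1 ^ 2 + x 2 ^ 2 + x 3 ^ 2 + x 4 ^ 2 + x 5 ^ 2)) * hs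

lemma sum_x_wv (x : Fin 6 → ℂ) (hs : (∑ k, x k) = 0) : (∑ k, x k * wv x k) = 3 * Fq x := by
  simp only [Fin.sum_univ_six] at hs
  simp only [wv, Fq, Fin.sum_univ_six]
  linear_combination (2 * (x 0 ^ 3 + x 1 ^ 3 + x 2 ^ 3 + x 3 ^ 3 + x 4 ^ 3 + x 5 ^ 3)) * hs


def Paired (y : Fin 6 → ℂ) : Prop :=
  ∃ i j k l m n : Fin 6,
    (∀ t : Fin 6, t = i ∨ t = j ∨ t = k ∨ t = l ∨ t = m ∨ t = n) ∧
    (i ≠ j ∧ i ≠ k ∧ i ≠ l ∧ i ≠ m ∧ i ≠ n ∧ j ≠ k ∧ j ≠ l ∧ j ≠ m ∧ j ≠ n ∧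
      k ≠ l ∧ k ≠ m ∧ k ≠ n ∧ l ≠ m ∧ l ≠ n ∧ m ≠ n) ∧
    (y i = y j ∧ y k = y l ∧ y m = y n)

lemma paired_fpf {y : Fin 6 → ℂ} (h : Paired y) :
    ∃ τ : Equiv.Perm (Fin 6), FPF τ ∧ ∀ k, y k = y (τ k) := by
  obtain ⟨i, j, k, l, m, n, hcov,
    ⟨hij, hik, hil, him, hin, hjk, hjl, hjm, hjn, hkl, hkm, hkn, hlm, hln, hmn⟩,
    hyij, hykl, hymn⟩ := h
  set τ : Equiv.Perm (Fin 6) := Equiv.swap i j * (Equiv.swap k l * Equiv.swap m n) with hτ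
  have ti : τ i = j := by
    rw [hτ, Equiv.Perm.mul_apply, Equiv.Perm.mul_apply,
      Equiv.swap_apply_of_ne_of_ne him hin, Equiv.swap_apply_of_ne_of_ne hik hil,
      Equiv.swap_apply_left]
  have tj : τ j = i := by
    rw [hτ, Equiv.Perm.mul_apply, Equiv.Perm.mul_apply,
      Equiv.swap_apply_of_ne_of_ne hjm hjn, Equiv.swap_apply_of_ne_of_ne hjk hjl,
      Equiv.swap_apply_right]
  have tk : τ k = l := by
    rw [hτ, Equiv.Perm.mul_apply, Equiv.Perm.mul_apply,
      Equiv.swap_apply_of_ne_of_ne hkm hkn, Equiv.swap_apply_left,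
      Equiv.swap_apply_of_ne_of_ne (Ne.symm hil) (Ne.symm hjl)]
  have tl : τ l = k := by
    rw [hτ, Equiv.Perm.mul_apply, Equiv.Perm.mul_apply,
      Equiv.swap_apply_of_ne_of_ne hlm hln, Equiv.swap_apply_right,
      Equiv.swap_apply_of_ne_of_ne (Ne.symm hik) (Ne.symm hjk)]
  have tm : τ m = n := by
    rw [hτ, Equiv.Perm.mul_apply, Equiv.Perm.mul_apply, Equiv.swap_apply_left,
      Equiv.swap_apply_of_ne_of_ne (Ne.symm hkn) (Ne.symm hln),
      Equiv.swap_apply_of_ne_of_ne (Ne.symm hin) (Ne.symm hjn)]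
  have tn : τ n = m := by
    rw [hτ, Equiv.Perm.mul_apply, Equiv.Perm.mul_apply, Equiv.swap_apply_right,
      Equiv.swap_apply_of_ne_of_ne (Ne.symm hkm) (Ne.symm hlm),
      Equiv.swap_apply_of_ne_of_ne (Ne.symm him) (Ne.symm hjm)]
  refine ⟨τ, ⟨?_, ?_⟩, ?_⟩
  · intro t
    rcases hcov t with rfl | rfl | rfl | rfl | rfl | rfl
    · rw [ti, tj]
    · rw [tj, ti]
    · rw [tk, tl]
    · rw [tl, tk]
    · rw [tm, tn]
    · rw [tn, tm]
  · intro t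
    rcases hcov t with rfl | rfl | rfl | rfl | rfl | rfl
    · rw [ti]; exact Ne.symm hij
    · rw [tj]; exact hij
    · rw [tk]; exact Ne.symm hkl
    · rw [tl]; exact hkl
    · rw [tm]; exact Ne.symm hmn
    · rw [tn]; exact hmn
  · intro t
    rcases hcov t with rfl | rfl | rfl | rfl | rfl | rfl
    · rw [ti]; exact hyij
    · rw [tj]; exact hyij.symm
    · rw [tk]; exact hykl
    · rw [tl]; exact hykl.symm
    · rw [tm]; exact hymn
    · rw [tn]; exact hymn.symm

lemma paired_subset {y : Fin 6 → ℂ} (h : Paired y) :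
    ∃ A : Finset (Fin 6), A.card = 3 ∧ (∑ k, eps A k * y k) = 0 := by
  obtain ⟨i, j, k, l, m, n, hcov,
    ⟨hij, hik, hil, him, hin, hjk, hjl, hjm, hjn, hkl, hkm, hkn, hlm, hln, hmn⟩,
    hyij, hykl, hymn⟩ := h
  refine ⟨{i, k, m}, ?_, ?_⟩
  · rw [Finset.card_insert_of_notMem (by simp [hik, him]),
      Finset.card_insert_of_notMem (by simp [hkm]), Finset.card_singleton]
  · have hU : (Finset.univ : Finset (Fin 6)) = {i, j, k, l, m, n} :=
      (Finset.eq_univ_iff_forall.mpr fun t => by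
        rcases hcov t with rfl | rfl | rfl | rfl | rfl | rfl <;> simp).symm
    rw [hU, Finset.sum_insert (by simp [hij, hik, hil, him, hin]),
      Finset.sum_insert (by simp [hjk, hjl, hjm, hjn]),
      Finset.sum_insert (by simp [hkl, hkm, hkn]),
      Finset.sum_insert (by simp [hlm, hln]),
      Finset.sum_insert (by simp [hmn]), Finset.sum_singleton]
    have ei : eps {i, k, m} i = 1 := by simp [eps]
    have ek : eps {i, k, m} k = 1 := by simp [eps]
    have em : eps {i, k, m} m = 1 := by simp [eps]
    have ej : eps {i, k, m} j = -1 := by simp [eps, Ne.symm hij, hjk, hjm]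
    have el : eps {i, k, m} l = -1 := by simp [eps, Ne.symm hil, Ne.symm hkl, hlm]
    have en : eps {i, k, m} n = -1 := by simp [eps, Ne.symm hin, Ne.symm hkn, Ne.symm hmn]
    rw [ei, ej, ek, el, em, en]
    linear_combination hyij + hykl + hymn

lemma fiber_sum (y : Fin 6 → ℂ) (u : ℂ) (f : ℂ → ℂ) :
    (∑ k ∈ Finset.univ.filter (fun k => y k = u), f (y k)) =
      ((Finset.univ.filter (fun k => y k = u)).card : ℂ) * f u := by
  rw [Finset.sum_congr rfl (fun k hk => by rw [(Finset.mem_filter.mp hk).2]),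
    Finset.sum_const, nsmul_eq_mul]

lemma paired_of_24 (y : Fin 6 → ℂ) (u v : ℂ) (huv : u ≠ v)
    (hval : ∀ t, y t = u ∨ y t = v)
    (h2 : (Finset.univ.filter (fun t => y t = u)).card = 2)
    (h4 : (Finset.univ.filter (fun t => y t = v)).card = 4) : Paired y := by
  obtain ⟨i, j, hij, hAu⟩ := Finset.card_eq_two.mp h2
  have hmem : (Finset.univ.filter (fun t => y t = v)).Nonempty :=
    Finset.card_pos.mp (by rw [h4]; norm_num)
  obtain ⟨m, hm⟩ := hmem
  have h3 : ((Finset.univ.filter (fun t => y t = v)).erase m).card = 3 := by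
    rw [Finset.card_erase_of_mem hm, h4]
  obtain ⟨q, r, s, hqr, hqs, hrs, hers⟩ := Finset.card_eq_three.mp h3
  have hq := Finset.mem_erase.mp (hers ▸ (by simp : q ∈ ({q, r, s} : Finset (Fin 6))))
  have hr := Finset.mem_erase.mp (hers ▸ (by simp : r ∈ ({q, r, s} : Finset (Fin 6))))
  have hs := Finset.mem_erase.mp (hers ▸ (by simp : s ∈ ({q, r, s} : Finset (Fin 6))))
  have yi : y i = u := (Finset.mem_filter.mp (by rw [hAu]; simp : i ∈ Finset.univ.filter (fun t => y t = u))).2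
  have yj : y j = u := (Finset.mem_filter.mp (by rw [hAu]; simp : j ∈ Finset.univ.filter (fun t => y t = u))).2
  have ym : y m = v := (Finset.mem_filter.mp hm).2
  have yq : y q = v := (Finset.mem_filter.mp hq.2).2
  have yr : y r = v := (Finset.mem_filter.mp hr.2).2
  have ys : y s = v := (Finset.mem_filter.mp hs.2).2
  have hcov : ∀ t : Fin 6, t = i ∨ t = j ∨ t = m ∨ t = q ∨ t = r ∨ t = s := by
    intro t
    rcases hval t with h | h
    · have ht : t ∈ Finset.univ.filter (fun t => y t = u) :=
        Finset.mem_filter.mpr ⟨Finset.mem_univ t, h⟩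
      rw [hAu] at ht
      simp only [Finset.mem_insert, Finset.mem_singleton] at ht
      tauto
    · have ht : t ∈ Finset.univ.filter (fun t => y t = v) :=
        Finset.mem_filter.mpr ⟨Finset.mem_univ t, h⟩
      rcases eq_or_ne t m with rfl | htm
      · tauto
      · have ht2 : t ∈ (Finset.univ.filter (fun t => y t = v)).erase m :=
          Finset.mem_erase.mpr ⟨htm, ht⟩
        rw [hers] at ht2
        simp only [Finset.mem_insert, Finset.mem_singleton] at ht2
        tauto
  have duv : ∀ a b : Fin 6, y a = u → y b = v → a ≠ b := by
    intro a b ha hb hab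
    exact huv (by rw [← ha, hab, hb])
  exact ⟨i, j, m, q, r, s, hcov,
    ⟨hij, duv i m yi ym, duv i q yi yq, duv i r yi yr, duv i s yi ys,
      duv j m yj ym, duv j q yj yq, duv j r yj yr, duv j s yj ys,
      Ne.symm hq.1, Ne.symm hr.1, Ne.symm hs.1, hqr, hqs, hrs⟩,
    by rw [yi, yj], by rw [ym, yq], by rw [yr, ys]⟩

lemma paired_of_222 (y : Fin 6 → ℂ) (u v w : ℂ) (huv : u ≠ v) (huw : u ≠ w) (hvw : v ≠ w)
    (hval : ∀ t, y t = u ∨ y t = v ∨ y t = w)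
    (h2u : (Finset.univ.filter (fun k => y k = u)).card = 2)
    (h2v : (Finset.univ.filter (fun k => y k = v)).card = 2)
    (h2w : (Finset.univ.filter (fun k => y k = w)).card = 2) : Paired y := by
  obtain ⟨i, j, hij, hEu⟩ := Finset.card_eq_two.mp h2u
  obtain ⟨k, l, hkl, hEv⟩ := Finset.card_eq_two.mp h2v
  obtain ⟨m, n, hmn, hEw⟩ := Finset.card_eq_two.mp h2w
  have yi : y i = u := (Finset.mem_filter.mp (by rw [hEu]; simp : i ∈ Finset.univ.filter (fun t => y t = u))).2
  have yj : y j = u := (Finset.mem_filter.mp (by rw [hEu]; simp : j ∈ Finset.univ.filter (fun t => y t = u))).2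
  have yk : y k = v := (Finset.mem_filter.mp (by rw [hEv]; simp : k ∈ Finset.univ.filter (fun t => y t = v))).2
  have yl : y l = v := (Finset.mem_filter.mp (by rw [hEv]; simp : l ∈ Finset.univ.filter (fun t => y t = v))).2
  have ym : y m = w := (Finset.mem_filter.mp (by rw [hEw]; simp : m ∈ Finset.univ.filter (fun t => y t = w))).2
  have yn : y n = w := (Finset.mem_filter.mp (by rw [hEw]; simp : n ∈ Finset.univ.filter (fun t => y t = w))).2
  have hcov : ∀ t : Fin 6, t = i ∨ t = j ∨ t = k ∨ t = l ∨ t = m ∨ t = n := by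
    intro t
    rcases hval t with h | h | h
    · have ht : t ∈ Finset.univ.filter (fun s => y s = u) :=
        Finset.mem_filter.mpr ⟨Finset.mem_univ t, h⟩
      rw [hEu] at ht
      simp only [Finset.mem_insert, Finset.mem_singleton] at ht
      tauto
    · have ht : t ∈ Finset.univ.filter (fun s => y s = v) :=
        Finset.mem_filter.mpr ⟨Finset.mem_univ t, h⟩
      rw [hEv] at ht
      simp only [Finset.mem_insert, Finset.mem_singleton] at ht
      tauto
    · have ht : t ∈ Finset.univ.filter (fun s => y s = w) :=
        Finset.mem_filter.mpr ⟨Finset.mem_univ t, h⟩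
      rw [hEw] at ht
      simp only [Finset.mem_insert, Finset.mem_singleton] at ht
      tauto
  have dd : ∀ (a b : Fin 6) (s t : ℂ), y a = s → y b = t → s ≠ t → a ≠ b := by
    intro a b s t ha hb hst hab
    exact hst (by rw [← ha, hab, hb])
  exact ⟨i, j, k, l, m, n, hcov,
    ⟨hij, dd i k u v yi yk huv, dd i l u v yi yl huv, dd i m u w yi ym huw,
      dd i n u w yi yn huw, dd j k u v yj yk huv, dd j l u v yj yl huv,
      dd j m u w yj ym huw, dd j n u w yj yn huw, hkl,
      dd k m v w yk ym hvw, dd k n v w yk yn hvw,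
      dd l m v w yl ym hvw, dd l n v w yl yn hvw, hmn⟩,
    by rw [yi, yj], by rw [yk, yl], by rw [ym, yn]⟩

set_option maxHeartbeats 1000000 in
lemma lemA {y : Fin 6 → ℂ} (hne : y ≠ 0) (hs : (∑ k, y k) = 0) (hw : ∀ k, wv y k = 0) :
    Paired y := by
  have rel : ∀ a b : Fin 6, y a ≠ y b →
      4 * (y a ^ 2 + y a * y b + y b ^ 2) = ∑ j, y j ^ 2 := by
    intro a b hab
    have h1 := hw a; have h2 := hw b
    simp only [wv] at h1 h2
    have h3 : (y a - y b) * (12 * (y a ^ 2 + y a * y b + y b ^ 2) - 3 * (∑ j, y j ^ 2)) = 0 := by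
      linear_combination h2 - h1
    rcases mul_eq_zero.mp h3 with h | h
    · exact absurd (sub_eq_zero.mp h) hab
    · linear_combination (1/3 : ℂ) * h
  have sum3 : ∀ a b c : Fin 6, y a ≠ y b → y b ≠ y c → y a ≠ y c →
      y a + y b + y c = 0 := by
    intro a b c hab hbc hac
    have r1 := rel a b hab
    have r2 := rel b c hbc
    have h3 : (y a - y c) * (y a + y b + y c) = 0 := by
      linear_combination (1/4 : ℂ) * r1 - (1/4 : ℂ) * r2
    rcases mul_eq_zero.mp h3 with h | h
    · exact absurd (sub_eq_zero.mp h) hac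
    · exact h
  have hmemT : ∀ k, y k ∈ Finset.univ.image y := fun k =>
    Finset.mem_image_of_mem y (Finset.mem_univ k)
  have hwit : ∀ v ∈ Finset.univ.image y, ∃ a, y a = v := by
    intro v hv
    obtain ⟨a, _, ha⟩ := Finset.mem_image.mp hv
    exact ⟨a, ha⟩
  have hTpos : 0 < (Finset.univ.image y).card := Finset.card_pos.mpr ⟨y 0, hmemT 0⟩
  have hTle : (Finset.univ.image y).card ≤ 3 := by
    by_contra hgt
    push_neg at hgt
    obtain ⟨t4, ht4T, ht4c⟩ := Finset.exists_subset_card_eq (show 4 ≤ (Finset.univ.image y).card by omega)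
    obtain ⟨v1, hv1⟩ := Finset.card_pos.mp (by rw [ht4c]; norm_num)
    have h3c : (t4.erase v1).card = 3 := by rw [Finset.card_erase_of_mem hv1, ht4c]
    obtain ⟨v2, v3, v4, h23, h24, h34, hset⟩ := Finset.card_eq_three.mp h3c
    have hv2 := Finset.mem_erase.mp (hset ▸ (by simp : v2 ∈ ({v2, v3, v4} : Finset ℂ)))
    have hv3 := Finset.mem_erase.mp (hset ▸ (by simp : v3 ∈ ({v2, v3, v4} : Finset ℂ)))
    have hv4 := Finset.mem_erase.mp (hset ▸ (by simp : v4 ∈ ({v2, v3, v4} : Finset ℂ)))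
    obtain ⟨a1, ha1⟩ := hwit v1 (ht4T hv1)
    obtain ⟨a2, ha2⟩ := hwit v2 (ht4T hv2.2)
    obtain ⟨a3, ha3⟩ := hwit v3 (ht4T hv3.2)
    obtain ⟨a4, ha4⟩ := hwit v4 (ht4T hv4.2)
    have e1 : v1 + v2 + v3 = 0 := by
      have := sum3 a1 a2 a3 (by rw [ha1, ha2]; exact Ne.symm hv2.1)
        (by rw [ha2, ha3]; exact h23) (by rw [ha1, ha3]; exact Ne.symm hv3.1)
      rw [ha1, ha2, ha3] at this; exact this
    have e2 : v1 + v2 + v4 = 0 := by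
      have := sum3 a1 a2 a4 (by rw [ha1, ha2]; exact Ne.symm hv2.1)
        (by rw [ha2, ha4]; exact h24) (by rw [ha1, ha4]; exact Ne.symm hv4.1)
      rw [ha1, ha2, ha4] at this; exact this
    exact h34 (by linear_combination e1 - e2)
  have hT123 : (Finset.univ.image y).card = 1 ∨ (Finset.univ.image y).card = 2 ∨
      (Finset.univ.image y).card = 3 := by omega
  rcases hT123 with h1 | h2 | h3
  · -- one value: y constant, hence zero
    obtain ⟨v, hTv⟩ := Finset.card_eq_one.mp h1
    have hall : ∀ k, y k = v := fun k => by
      have := hmemT k; rw [hTv] at this; simpa using this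
    have h6v : (6 : ℂ) * v = 0 := by
      have h0 : ∑ k : Fin 6, y k = (6 : ℂ) * v := by
        rw [Finset.sum_congr rfl fun k _ => hall k, Finset.sum_const]
        simp
      rw [hs] at h0; exact h0.symm
    have hv0 : v = 0 := by
      rcases mul_eq_zero.mp h6v with h | h
      · exact absurd h (by norm_num)
      · exact h
    exact absurd (funext fun k => by rw [hall k, hv0]; rfl) hne
  · -- two values
    obtain ⟨u, v, huv, hTuv⟩ := Finset.card_eq_two.mp h2
    have hval : ∀ k, y k = u ∨ y k = v := fun k => by
      have := hmemT k; rw [hTuv] at this; simpa using this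
    obtain ⟨iu, hiu⟩ := hwit u (by rw [hTuv]; simp)
    obtain ⟨iv, hiv⟩ := hwit v (by rw [hTuv]; simp)
    have hquad : 4 * (u ^ 2 + u * v + v ^ 2) = ∑ j, y j ^ 2 := by
      have := rel iu iv (by rw [hiu, hiv]; exact huv)
      rw [hiu, hiv] at this; exact this
    obtain ⟨na, hna⟩ : ∃ nn, (Finset.univ.filter (fun k => y k = u)).card = nn := ⟨_, rfl⟩
    obtain ⟨nb, hnb⟩ : ∃ nn, (Finset.univ.filter (fun k => y k = v)).card = nn := ⟨_, rfl⟩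
    have hAveq : Finset.univ.filter (fun k => ¬ y k = u) =
        Finset.univ.filter (fun k => y k = v) := by
      ext t
      simp only [Finset.mem_filter, Finset.mem_univ, true_and]
      constructor
      · intro h; exact (hval t).resolve_left h
      · intro h h2; exact huv (h2.symm.trans h)
    have hcards : na + nb = 6 := by
      rw [← hna, ← hnb, ← hAveq, Finset.card_filter_add_card_filter_not,
        Finset.card_univ]
      simp
    have e1u : (∑ k ∈ Finset.univ.filter (fun k => y k = u), y k) = (na : ℂ) * u := by
      rw [← hna]; simpa using fiber_sum y u (fun t => t)
    have e1v : (∑ k ∈ Finset.univ.filter (fun k => y k = v), y k) = (nb : ℂ) * v := by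
      rw [← hnb]; simpa using fiber_sum y v (fun t => t)
    have e2u : (∑ k ∈ Finset.univ.filter (fun k => y k = u), y k ^ 2) = (na : ℂ) * u ^ 2 := by
      rw [← hna]; simpa using fiber_sum y u (fun t => t ^ 2)
    have e2v : (∑ k ∈ Finset.univ.filter (fun k => y k = v), y k ^ 2) = (nb : ℂ) * v ^ 2 := by
      rw [← hnb]; simpa using fiber_sum y v (fun t => t ^ 2)
    have hsum1 : (na : ℂ) * u + (nb : ℂ) * v = 0 := by
      have h0 := Finset.sum_filter_add_sum_filter_not Finset.univ (fun k => y k = u) y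
      rw [hAveq, hs, e1u, e1v] at h0
      exact h0
    have hsum2 : (na : ℂ) * u ^ 2 + (nb : ℂ) * v ^ 2 = ∑ j, y j ^ 2 := by
      have h0 := Finset.sum_filter_add_sum_filter_not Finset.univ (fun k => y k = u)
        (fun k => y k ^ 2)
      rw [hAveq, e2u, e2v] at h0
      exact h0
    have hu1 : 0 < na := by
      rw [← hna]
      exact Finset.card_pos.mpr ⟨iu, Finset.mem_filter.mpr ⟨Finset.mem_univ iu, hiu⟩⟩
    have hv1 : 0 < nb := by
      rw [← hnb]
      exact Finset.card_pos.mpr ⟨iv, Finset.mem_filter.mpr ⟨Finset.mem_univ iv, hiv⟩⟩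
    have hacase : na = 1 ∨ na = 2 ∨ na = 3 ∨ na = 4 ∨ na = 5 := by omega
    rcases hacase with ha | ha | ha | ha | ha
    · -- (1,5) impossible
      have hb : nb = 5 := by omega
      rw [ha] at hsum1 hsum2; rw [hb] at hsum1 hsum2
      push_cast at hsum1 hsum2
      have hu : u = -5 * v := by linear_combination hsum1
      have hd : u ^ 2 + 5 * v ^ 2 = 4 * (u ^ 2 + u * v + v ^ 2) := by
        linear_combination hsum2 - hquad
      rw [hu] at hd
      have hv2 : v ^ 2 = 0 := by linear_combination (-1/54 : ℂ) * hd
      have hv0 : v = 0 := pow_eq_zero_iff (two_ne_zero) |>.mp hv2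
      exact absurd (by rw [hu, hv0]; ring) huv
    · -- (2,4)
      have hb : nb = 4 := by omega
      exact paired_of_24 y u v huv hval (hna.trans ha) (hnb.trans hb)
    · -- (3,3) impossible
      have hb : nb = 3 := by omega
      rw [ha] at hsum1 hsum2; rw [hb] at hsum1 hsum2
      push_cast at hsum1 hsum2
      have hu : u = -v := by linear_combination (1/3 : ℂ) * hsum1
      have hd : 3 * u ^ 2 + 3 * v ^ 2 = 4 * (u ^ 2 + u * v + v ^ 2) := by
        linear_combination hsum2 - hquad
      rw [hu] at hd
      have hv2 : v ^ 2 = 0 := by linear_combination (1/2 : ℂ) * hd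
      have hv0 : v = 0 := pow_eq_zero_iff (two_ne_zero) |>.mp hv2
      exact absurd (by rw [hu, hv0]; ring) huv
    · -- (4,2)
      have hb : nb = 2 := by omega
      exact paired_of_24 y v u (Ne.symm huv) (fun t => (hval t).symm)
        (hnb.trans hb) (hna.trans ha)
    · -- (5,1) impossible
      have hb : nb = 1 := by omega
      rw [ha] at hsum1 hsum2; rw [hb] at hsum1 hsum2
      push_cast at hsum1 hsum2
      have hv' : v = -5 * u := by linear_combination hsum1
      have hd : 5 * u ^ 2 + v ^ 2 = 4 * (u ^ 2 + u * v + v ^ 2) := by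
        linear_combination hsum2 - hquad
      rw [hv'] at hd
      have hu2 : u ^ 2 = 0 := by linear_combination (-1/54 : ℂ) * hd
      have hu0 : u = 0 := pow_eq_zero_iff (two_ne_zero) |>.mp hu2
      exact absurd (by rw [hv', hu0]; ring) (Ne.symm huv)
  · -- three values
    obtain ⟨u, v, w, huv, huw, hvw, hTuvw⟩ := Finset.card_eq_three.mp h3
    have hval : ∀ k, y k = u ∨ y k = v ∨ y k = w := fun k => by
      have := hmemT k; rw [hTuvw] at this; simpa using this
    obtain ⟨iu, hiu⟩ := hwit u (by rw [hTuvw]; simp)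
    obtain ⟨iv, hiv⟩ := hwit v (by rw [hTuvw]; simp)
    obtain ⟨iw, hiw⟩ := hwit w (by rw [hTuvw]; simp)
    have hsum0 : u + v + w = 0 := by
      have := sum3 iu iv iw (by rw [hiu, hiv]; exact huv) (by rw [hiv, hiw]; exact hvw)
        (by rw [hiu, hiw]; exact huw)
      rw [hiu, hiv, hiw] at this; exact this
    have hquad : 4 * (u ^ 2 + u * v + v ^ 2) = ∑ j, y j ^ 2 := by
      have := rel iu iv (by rw [hiu, hiv]; exact huv)
      rw [hiu, hiv] at this; exact this
    obtain ⟨nu, hnu⟩ : ∃ nn, (Finset.univ.filter (fun k => y k = u)).card = nn := ⟨_, rfl⟩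
    obtain ⟨nv, hnv⟩ : ∃ nn, (Finset.univ.filter (fun k => y k = v)).card = nn := ⟨_, rfl⟩
    obtain ⟨nw, hnw⟩ : ∃ nn, (Finset.univ.filter (fun k => y k = w)).card = nn := ⟨_, rfl⟩
    have E0n : nu + nv + nw = 6 := by
      have h0 := Finset.card_eq_sum_card_fiberwise
        (s := Finset.univ) (t := Finset.univ.image y) (f := y) (fun k _ => hmemT k)
      rw [hTuvw, Finset.sum_insert (by simp [huv, huw]),
        Finset.sum_insert (by simp [hvw]), Finset.sum_singleton, Finset.card_univ,
        hnu, hnv, hnw] at h0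
      simp only [Fintype.card_fin] at h0
      omega
    have e1u : (∑ k ∈ Finset.univ.filter (fun k => y k = u), y k) = (nu : ℂ) * u := by
      rw [← hnu]; simpa using fiber_sum y u (fun t => t)
    have e1v : (∑ k ∈ Finset.univ.filter (fun k => y k = v), y k) = (nv : ℂ) * v := by
      rw [← hnv]; simpa using fiber_sum y v (fun t => t)
    have e1w : (∑ k ∈ Finset.univ.filter (fun k => y k = w), y k) = (nw : ℂ) * w := by
      rw [← hnw]; simpa using fiber_sum y w (fun t => t)
    have e2u : (∑ k ∈ Finset.univ.filter (fun k => y k = u), y k ^ 2) = (nu : ℂ) * u ^ 2 := by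
      rw [← hnu]; simpa using fiber_sum y u (fun t => t ^ 2)
    have e2v : (∑ k ∈ Finset.univ.filter (fun k => y k = v), y k ^ 2) = (nv : ℂ) * v ^ 2 := by
      rw [← hnv]; simpa using fiber_sum y v (fun t => t ^ 2)
    have e2w : (∑ k ∈ Finset.univ.filter (fun k => y k = w), y k ^ 2) = (nw : ℂ) * w ^ 2 := by
      rw [← hnw]; simpa using fiber_sum y w (fun t => t ^ 2)
    have E1 : (nu : ℂ) * u + (nv : ℂ) * v + (nw : ℂ) * w = 0 := by
      have h0 := Finset.sum_fiberwise_of_maps_to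
        (s := Finset.univ) (t := Finset.univ.image y) (g := y) (fun k _ => hmemT k) y
      rw [hTuvw, Finset.sum_insert (by simp [huv, huw]),
        Finset.sum_insert (by simp [hvw]), Finset.sum_singleton,
        e1u, e1v, e1w, hs] at h0
      linear_combination h0
    have E2 : (nu : ℂ) * u ^ 2 + (nv : ℂ) * v ^ 2 + (nw : ℂ) * w ^ 2 = ∑ j, y j ^ 2 := by
      have h0 := Finset.sum_fiberwise_of_maps_to
        (s := Finset.univ) (t := Finset.univ.image y) (g := y) (fun k _ => hmemT k)
        (fun k => y k ^ 2)
      rw [hTuvw, Finset.sum_insert (by simp [huv, huw]),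
        Finset.sum_insert (by simp [hvw]), Finset.sum_singleton,
        e2u, e2v, e2w] at h0
      linear_combination h0
    have E0c : (nu : ℂ) + (nv : ℂ) + (nw : ℂ) = 6 := by exact_mod_cast E0n
    have hA : ((nu : ℂ) - 2) * ((u - v) * (u - w)) = 0 := by
      linear_combination E2 - (v + w) * E1 + v * w * E0c + (2*u + 4*v) * hsum0 - hquad
    have hB : ((nv : ℂ) - 2) * ((v - u) * (v - w)) = 0 := by
      linear_combination E2 - (u + w) * E1 + u * w * E0c + (2*v + 4*u) * hsum0 - hquad
    have hau : nu = 2 := by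
      rcases mul_eq_zero.mp hA with h | h
      · exact_mod_cast sub_eq_zero.mp h
      · rcases mul_eq_zero.mp h with h' | h'
        · exact absurd (sub_eq_zero.mp h') huv
        · exact absurd (sub_eq_zero.mp h') huw
    have hav : nv = 2 := by
      rcases mul_eq_zero.mp hB with h | h
      · exact_mod_cast sub_eq_zero.mp h
      · rcases mul_eq_zero.mp h with h' | h'
        · exact absurd (sub_eq_zero.mp h') (Ne.symm huv)
        · exact absurd (sub_eq_zero.mp h') hvw
    have haw : nw = 2 := by omega
    exact paired_of_222 y u v w huv huw hvw hval
      (hnu.trans hau) (hnv.trans hav) (hnw.trans haw)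

lemma lem_zzero (p : Fin 6 → ℂ) (hp : p ≠ 0) (hpsum : (∑ k, p k) = 0) (hpF : Fq p = 0)
    (hpnodes : ∀ A : Finset (Fin 6), A.card = 3 → (∑ k, eps A k * p k) ≠ 0)
    (hz : ∀ k, zv p k = 0) : False := by
  obtain ⟨μ, hμ⟩ := IsAlgClosed.exists_pow_nat_eq ((∑ j, wv p j ^ 2) / 6) (n := 2) zero_lt_two
  have hsq : ∀ k, (wv p k - μ) * (wv p k + μ) = 0 := by
    intro k
    have h := hz k
    simp only [zv] at h
    linear_combination (1/6 : ℂ) * h - hμ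
  by_cases hμ0 : μ = 0
  · have hw0 : ∀ k, wv p k = 0 := by
      intro k
      have h := hsq k
      rw [hμ0, sub_zero, add_zero] at h
      exact mul_self_eq_zero.mp h
    obtain ⟨A, hA3, hAsum⟩ := paired_subset (lemA hp hpsum hw0)
    exact hpnodes A hA3 hAsum
  · have hpm : ∀ k, wv p k = μ ∨ wv p k = -μ := by
      intro k
      rcases mul_eq_zero.mp (hsq k) with h | h
      · exact Or.inl (sub_eq_zero.mp h)
      · exact Or.inr (eq_neg_of_add_eq_zero_left h)
    have hnotA : ∀ k, k ∉ Finset.univ.filter (fun k => wv p k = μ) → wv p k = -μ := by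
      intro k hk
      rcases hpm k with h | h
      · exact absurd (Finset.mem_filter.mpr ⟨Finset.mem_univ k, h⟩) hk
      · exact h
    obtain ⟨ca, hca⟩ : ∃ nn, (Finset.univ.filter (fun k => wv p k = μ)).card = nn := ⟨_, rfl⟩
    obtain ⟨cb, hcb⟩ : ∃ nn, (Finset.univ.filter (fun k => ¬ wv p k = μ)).card = nn := ⟨_, rfl⟩
    have hcab : ca + cb = 6 := by
      rw [← hca, ← hcb, Finset.card_filter_add_card_filter_not, Finset.card_univ]
      simp
    have hws : (∑ k, wv p k) = 0 := sum_wv p hpsum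
    have h1 : (∑ k ∈ Finset.univ.filter (fun k => wv p k = μ), wv p k) = (ca : ℂ) * μ := by
      rw [← hca]; simpa using fiber_sum (wv p) μ (fun t => t)
    have h2 : (∑ k ∈ Finset.univ.filter (fun k => ¬ wv p k = μ), wv p k) = (cb : ℂ) * (-μ) := by
      rw [← hcb, Finset.sum_congr rfl (fun k hk => hnotA k (by
          intro hin
          exact (Finset.mem_filter.mp hk).2 (Finset.mem_filter.mp hin).2)),
        Finset.sum_const, nsmul_eq_mul]
    have hsplit := Finset.sum_filter_add_sum_filter_not Finset.univ (fun k => wv p k = μ) (wv p)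
    rw [h1, h2, hws] at hsplit
    have hca3 : ca = 3 := by
      have hmul : ((ca : ℂ) - (cb : ℂ)) * μ = 0 := by linear_combination hsplit
      rcases mul_eq_zero.mp hmul with h | h
      · have : (ca : ℂ) = (cb : ℂ) := sub_eq_zero.mp h
        have : ca = cb := by exact_mod_cast this
        omega
      · exact absurd h hμ0
    have hxw : (∑ k, p k * wv p k) = 0 := by
      rw [sum_x_wv p hpsum, hpF, mul_zero]
    have heq : (∑ k, p k * wv p k) =
        μ * (∑ k, eps (Finset.univ.filter (fun k => wv p k = μ)) k * p k) := by
      rw [Finset.mul_sum]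
      apply Finset.sum_congr rfl
      intro k _
      by_cases hk : k ∈ Finset.univ.filter (fun k => wv p k = μ)
      · rw [(Finset.mem_filter.mp hk).2]
        simp only [eps, if_pos hk]
        ring
      · rw [hnotA k hk]
        simp only [eps, if_neg hk]
        ring
    rw [heq] at hxw
    rcases mul_eq_zero.mp hxw with h | h
    · exact hμ0 h
    · exact hpnodes _ (hca.trans hca3) h


/-- let `[p]` be a point of the Castelnuovo–Richmond quartic lying on none
of the 10 hyperplanes dual to the nodes of the Segre cubic, and let `g = ∇F(p)`.  If
`[x]` is a smooth point of `CR₄` lying on the tangent hyperplane `{∑ g_k x_k = 0}` at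
which `(1,…,1)`, `∇F(x)`, `g` are linearly dependent, then `[x] = [p]`: the tangent
hyperplane of `CR₄` at `p` is tangent to `CR₄` only at `p`. -/
theorem tangent_hyperplane_unique_tangency (p : Fin 6 → ℂ) (hp : p ≠ 0)
    (hpsum : (∑ k, p k) = 0) (hpF : Fq p = 0)
    (hpnodes : ∀ A : Finset (Fin 6), A.card = 3 → (∑ k, eps A k * p k) ≠ 0)
    (x : Fin 6 → ℂ) (hx : x ≠ 0) (hxsum : (∑ k, x k) = 0) (hxF : Fq x = 0)
    (hxtang : (∑ k, gradF p k * x k) = 0)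
    (hxsmooth : ¬ ∃ τ : Equiv.Perm (Fin 6), FPF τ ∧ ∀ k, x k = x (τ k))
    (hdep : ¬ LinearIndependent ℂ ![(1 : Fin 6 → ℂ), gradF x, gradF p]) :
    ∃ c : ℂ, c ≠ 0 ∧ x = c • p := by
  rw [Fintype.not_linearIndependent_iff] at hdep
  obtain ⟨g, hcomb, i0, hgi⟩ := hdep
  have hptw : ∀ k, g 0 + g 1 * gradF x k + g 2 * gradF p k = 0 := by
    intro k
    have h := congrFun hcomb k
    simp only [Fin.sum_univ_three, Matrix.cons_val_zero, Matrix.cons_val_one, Matrix.head_cons,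
      Matrix.cons_val_two, Matrix.tail_cons, Pi.add_apply, Pi.smul_apply, Pi.one_apply,
      smul_eq_mul, Pi.zero_apply] at h
    linear_combination h
  have hk : ∀ k, g 1 * wv x k + g 2 * wv p k =
      -(3/4) * g 0 + 2 * g 1 * (∑ j, x j ^ 3) + 2 * g 2 * (∑ j, p j ^ 3) := by
    intro k
    have h := hptw k
    simp only [gradF] at h
    simp only [wv]
    linear_combination (3/4 : ℂ) * h
  have hkap : -(3/4) * g 0 + 2 * g 1 * (∑ j, x j ^ 3) + 2 * g 2 * (∑ j, p j ^ 3) = 0 := by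
    have h2 : (∑ k : Fin 6, (g 1 * wv x k + g 2 * wv p k)) =
        6 * (-(3/4) * g 0 + 2 * g 1 * (∑ j, x j ^ 3) + 2 * g 2 * (∑ j, p j ^ 3)) := by
      rw [Finset.sum_congr rfl fun k _ => hk k, Finset.sum_const, Finset.card_univ]
      simp only [Fintype.card_fin, nsmul_eq_mul]
      norm_num
    have h3 : (∑ k : Fin 6, (g 1 * wv x k + g 2 * wv p k)) = 0 := by
      rw [Finset.sum_add_distrib, ← Finset.mul_sum, ← Finset.mul_sum,
        sum_wv x hxsum, sum_wv p hpsum]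
      ring
    linear_combination (1/6 : ℂ) * h3 - (1/6 : ℂ) * h2
  have hw2 : ∀ k, g 1 * wv x k + g 2 * wv p k = 0 := fun k => (hk k).trans hkap
  by_cases hc : g 2 = 0
  · by_cases hb : g 1 = 0
    · have ha : g 0 = 0 := by
        have h := hptw 0
        rw [hb, hc] at h
        simpa using h
      have : g i0 = 0 := by fin_cases i0 <;> assumption
      exact absurd this hgi
    · have hwx : ∀ k, wv x k = 0 := by
        intro k
        have h := hw2 k
        rw [hc, zero_mul, add_zero] at h
        exact (mul_eq_zero.mp h).resolve_left hb
      exact absurd (paired_fpf (lemA hx hxsum hwx)) hxsmooth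
  · by_cases hb : g 1 = 0
    · have hwp : ∀ k, wv p k = 0 := by
        intro k
        have h := hw2 k
        rw [hb, zero_mul, zero_add] at h
        exact (mul_eq_zero.mp h).resolve_left hc
      obtain ⟨A, hA3, hAs⟩ := paired_subset (lemA hp hpsum hwp)
      exact absurd hAs (hpnodes A hA3)
    · -- main case
      have hβ : ∀ k, wv x k = (-(g 2) / g 1) * wv p k := by
        intro k
        rw [div_mul_eq_mul_div, eq_div_iff hb]
        linear_combination hw2 k
      have hβne : (-(g 2) / g 1) ≠ 0 := div_ne_zero (neg_ne_zero.mpr hc) hb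
      have hz : ∀ k, zv x k = (-(g 2) / g 1) ^ 2 * zv p k := by
        intro k
        have hsum : (∑ j, wv x j ^ 2) = ∑ j, ((-(g 2) / g 1) * wv p j) ^ 2 :=
          Finset.sum_congr rfl fun j _ => by rw [hβ j]
        have hsum2 : (∑ j, ((-(g 2) / g 1) * wv p j) ^ 2) =
            (-(g 2) / g 1) ^ 2 * ∑ j, wv p j ^ 2 := by
          rw [Finset.mul_sum]
          exact Finset.sum_congr rfl fun j _ => by ring
        simp only [zv]
        rw [hβ k, hsum, hsum2]
        ring
      by_cases hzp : ∀ k, zv p k = 0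
      · exact (lem_zzero p hp hpsum hpF hpnodes hzp).elim
      · push_neg at hzp
        obtain ⟨k0, hk0⟩ := hzp
        obtain ⟨ip, hip⟩ : ∃ i, p i ≠ 0 := by
          by_contra hcon
          push_neg at hcon
          exact hp (funext fun i => hcon i)
        obtain ⟨ix, hix⟩ : ∃ i, x i ≠ 0 := by
          by_contra hcon
          push_neg at hcon
          exact hx (funext fun i => hcon i)
        have hzp_eq : ∀ k, zv p k = (zv p ip / p ip) * p k := by
          intro k
          rw [div_mul_eq_mul_div, eq_div_iff hip]
          exact cross p hpsum hpF k ip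
        have hlp : (zv p ip / p ip) ≠ 0 := by
          intro h0
          exact hk0 (by rw [hzp_eq k0, h0, zero_mul])
        have hzx_eq : ∀ k, zv x k = (zv x ix / x ix) * x k := by
          intro k
          rw [div_mul_eq_mul_div, eq_div_iff hix]
          exact cross x hxsum hxF k ix
        have hlx : (zv x ix / x ix) ≠ 0 := by
          intro h0
          have h1 := hzx_eq k0
          rw [h0, zero_mul] at h1
          have h2 := hz k0
          rw [h1] at h2
          exact hk0 ((mul_eq_zero.mp h2.symm).resolve_left (pow_ne_zero 2 hβne))
        refine ⟨(-(g 2) / g 1) ^ 2 * (zv p ip / p ip) / (zv x ix / x ix), ?_, ?_⟩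
        · exact div_ne_zero (mul_ne_zero (pow_ne_zero 2 hβne) hlp) hlx
        · funext k
          have h1 : (zv x ix / x ix) * x k =
              (-(g 2) / g 1) ^ 2 * ((zv p ip / p ip) * p k) := by
            rw [← hzx_eq k, ← hzp_eq k]
            exact hz k
          show x k = _
          rw [Pi.smul_apply, smul_eq_mul, div_mul_eq_mul_div, eq_div_iff hlx]
          linear_combination h1
end

section
/- Let p ∈ ℂ⁶ with Σ_k p_k = 0 and F(p) = 0, and suppose Σ_k ε^A_k p_k = 0 for some 3-element subset A ⊆ {0,…,5}. Then Σ_k ε^A_k p_k² = 0, and ∇F(p) is a linear combination of (1,…,1) and ε^A. In particular, at every smooth point of the Castelnuovo–Richmond quartic lying on the hyperplane {[x] : Σ_k ε^A_k x_k = 0} dual to the node [ε^A], the tangent hyperplane of CR₄ equals that hyperplane itself, so the tangent hyperplane section of CR₄ there is the non-reduced quadric obtained by doubling {Σ_k ε^A_k x_k² = 0}. -/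
open scoped BigOperators

lemma key_s19 (x y z d e f : ℂ)
    (h1 : x + y + z = 0) (h2 : d + e + f = 0)
    (hF : (x^2+y^2+z^2+d^2+e^2+f^2)^2 - 4*(x^4+y^4+z^4+d^4+e^4+f^4) = 0) :
    (x^2+y^2+z^2) - (d^2+e^2+f^2) = 0 ∧
    ∃ a b : ℂ,
      (4*x*(x^2+y^2+z^2+d^2+e^2+f^2) - 16*x^3 = a + b) ∧
      (4*y*(x^2+y^2+z^2+d^2+e^2+f^2) - 16*y^3 = a + b) ∧
      (4*z*(x^2+y^2+z^2+d^2+e^2+f^2) - 16*z^3 = a + b) ∧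
      (4*d*(x^2+y^2+z^2+d^2+e^2+f^2) - 16*d^3 = a - b) ∧
      (4*e*(x^2+y^2+z^2+d^2+e^2+f^2) - 16*e^3 = a - b) ∧
      (4*f*(x^2+y^2+z^2+d^2+e^2+f^2) - 16*f^3 = a - b) := by
  have hsq : ((x^2+y^2+z^2) - (d^2+e^2+f^2))^2 = 0 := by
    linear_combination -hF + (2*(-x+y+z)*(x-y+z)*(x+y-z))*h1 + (2*(-d+e+f)*(d-e+f)*(d+e-f))*h2
  have hq : (x^2+y^2+z^2) - (d^2+e^2+f^2) = 0 := by
    exact pow_eq_zero_iff (two_ne_zero) |>.mp hsq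
  refine ⟨hq, (-16*x*y*z + -16*d*e*f)/2, (-16*x*y*z - -16*d*e*f)/2, ?_, ?_, ?_, ?_, ?_, ?_⟩
  · linear_combination (-4*x)*hq + (8*x*(y+z-x))*h1
  · linear_combination (-4*y)*hq + (8*y*(x+z-y))*h1
  · linear_combination (-4*z)*hq + (8*z*(x+y-z))*h1
  · linear_combination (4*d)*hq + (8*d*(e+f-d))*h2
  · linear_combination (4*e)*hq + (8*e*(d+f-e))*h2
  · linear_combination (4*f)*hq + (8*f*(d+e-f))*h2

/-- if `p` lies on the Castelnuovo–Richmond quartic and on the hyperplane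
`{∑ ε^A_k x_k = 0}` dual to the node `[ε^A]`, then `∑ ε^A_k p_k² = 0` and `∇F(p)` is a
linear combination of `(1,…,1)` and `ε^A`; so at every smooth point of `CR₄` on that
hyperplane the tangent hyperplane of `CR₄` is the hyperplane itself, and the tangent
hyperplane section there is the non-reduced quadric doubling `{∑ ε^A_k x_k² = 0}`. -/
theorem tangent_at_node_hyperplane (p : Fin 6 → ℂ) (hsum : (∑ k, p k) = 0)
    (hF : Fq p = 0) (A : Finset (Fin 6)) (hA : A.card = 3)
    (hpA : (∑ k, eps A k * p k) = 0) :
    (∑ k, eps A k * (p k) ^ 2) = 0 ∧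
    ∃ a b : ℂ, gradF p = a • (1 : Fin 6 → ℂ) + b • eps A := by
  obtain ⟨i, j, k, hij, hik, hjk, hAeq⟩ := Finset.card_eq_three.mp hA
  have hAc : Aᶜ.card = 3 := by
    rw [Finset.card_compl, hA]; rfl
  obtain ⟨l, m, n, hlm, hln, hmn, hAceq⟩ := Finset.card_eq_three.mp hAc
  have hiA : i ∈ A := by rw [hAeq]; simp
  have hjA : j ∈ A := by rw [hAeq]; simp
  have hkA : k ∈ A := by rw [hAeq]; simp
  have hlA : l ∉ A := by
    have : l ∈ Aᶜ := by rw [hAceq]; simp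
    simpa using this
  have hmA : m ∉ A := by
    have : m ∈ Aᶜ := by rw [hAceq]; simp
    simpa using this
  have hnA : n ∉ A := by
    have : n ∈ Aᶜ := by rw [hAceq]; simp
    simpa using this
  have split : ∀ g : Fin 6 → ℂ, ∑ t, g t = (g i + g j + g k) + (g l + g m + g n) := by
    intro g
    rw [← Finset.sum_add_sum_compl A g, hAceq, hAeq,
      Finset.sum_insert (by simp [hij, hik]), Finset.sum_pair hjk,
      Finset.sum_insert (by simp [hlm, hln]), Finset.sum_pair hmn]
    ring
  have ei : eps A i = 1 := by simp [eps, hiA]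
  have ej : eps A j = 1 := by simp [eps, hjA]
  have ek : eps A k = 1 := by simp [eps, hkA]
  have el : eps A l = -1 := by simp [eps, hlA]
  have em : eps A m = -1 := by simp [eps, hmA]
  have en : eps A n = -1 := by simp [eps, hnA]
  rw [split] at hsum hpA
  rw [ei, ej, ek, el, em, en] at hpA
  have h1 : p i + p j + p k = 0 := by linear_combination hsum / 2 + hpA / 2
  have h2 : p l + p m + p n = 0 := by linear_combination hsum / 2 - hpA / 2
  rw [Fq, split (fun t => (p t) ^ 2), split (fun t => (p t) ^ 4)] at hF
  have hF' : ((p i)^2+(p j)^2+(p k)^2+(p l)^2+(p m)^2+(p n)^2)^2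
      - 4*((p i)^4+(p j)^4+(p k)^4+(p l)^4+(p m)^4+(p n)^4) = 0 := by
    linear_combination hF
  obtain ⟨hq, a, b, c1, c2, c3, c4, c5, c6⟩ :=
    key_s19 (p i) (p j) (p k) (p l) (p m) (p n) h1 h2 hF'
  constructor
  · rw [split (fun t => eps A t * (p t) ^ 2), ei, ej, ek, el, em, en]
    linear_combination hq
  · refine ⟨a, b, ?_⟩
    funext t
    have hsum2 : ∑ u : Fin 6, (p u) ^ 2
        = (p i)^2+(p j)^2+(p k)^2+((p l)^2+(p m)^2+(p n)^2) :=
      split (fun t => (p t) ^ 2)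
    simp only [gradF, Pi.add_apply, Pi.smul_apply, Pi.one_apply, smul_eq_mul, hsum2]
    by_cases htA : t ∈ A
    · rw [hAeq] at htA
      simp only [Finset.mem_insert, Finset.mem_singleton] at htA
      rcases htA with rfl | rfl | rfl
      · rw [ei]; linear_combination c1
      · rw [ej]; linear_combination c2
      · rw [ek]; linear_combination c3
    · have : t ∈ Aᶜ := Finset.mem_compl.mpr htA
      rw [hAceq] at this
      simp only [Finset.mem_insert, Finset.mem_singleton] at this
      rcases this with rfl | rfl | rfl
      · rw [el]; linear_combination c4
      · rw [em]; linear_combination c5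
      · rw [en]; linear_combination c6
end
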